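/- arXiv:2112.06634 — 4 statements merged into one kernel-verified Lean document; each statement's English description precedes it below -/
import Mathlib

section
/- The function d(x,y) = |x' - y'| + min( |x'' - y''| / (|x'| + |y'|)^κ , |x'' - y''|^{1/(1+κ)} ) on ℝ^{n₁} × ℝ^{n₂} (with the convention that the first term in the min is +∞ when |x'| + |y'| = 0) is a quasi-metric: it is nonnegative, symmetric, vanishes exactly on the diagonal, and there exists a constant C₀ ≥ 1 such that d(x,y) ≤ C₀ (d(x,z) + d(z,y)) for all x, y, z. -/
open MeasureTheory Filter Topology

/-- The Grushin product space `ℝ^{n₁} × ℝ^{n₂}` with Euclidean norms on the factors. -/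
abbrev GS (n₁ n₂ : ℕ) := EuclideanSpace ℝ (Fin n₁) × EuclideanSpace ℝ (Fin n₂)

/-- The Grushin quasi-metric
`d(x,y) = |x'-y'| + |x''-y''|/(|x'|+|y'|)^κ` when `|x''-y''|^{1/(1+κ)} ≤ |x'|+|y'|`,
and `d(x,y) = |x'-y'| + |x''-y''|^{1/(1+κ)}` otherwise (this piecewise form implements the
convention that the first term of the min is `+∞` when `|x'|+|y'| = 0`). -/
noncomputable def gd (n₁ n₂ κ : ℕ) (x y : GS n₁ n₂) : ℝ :=
  ‖x.1 - y.1‖ +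
    if ‖x.2 - y.2‖ ^ ((1 : ℝ) / (1 + (κ : ℝ))) ≤ ‖x.1‖ + ‖y.1‖ then
      ‖x.2 - y.2‖ / (‖x.1‖ + ‖y.1‖) ^ κ
    else ‖x.2 - y.2‖ ^ ((1 : ℝ) / (1 + (κ : ℝ)))

/-- Key estimate: if `t ≤ 2s + a` and `s ≤ 2 u^p`, then `u^p ≤ 5^κ (a + m₁)` where
`m₁` is the Grushin second-component term. -/
lemma gd_key1 (κ : ℕ) (u t a s : ℝ) (hu : 0 ≤ u) (ht : 0 ≤ t) (ha : 0 ≤ a)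
    (hta : t ≤ 2*s + a) (hs : s ≤ 2 * u ^ ((1 : ℝ) / (1 + (κ : ℝ)))) :
    u ^ ((1 : ℝ) / (1 + (κ : ℝ))) ≤
      5^κ * (a + (if u ^ ((1 : ℝ) / (1 + (κ : ℝ))) ≤ t then u / t^κ
        else u ^ ((1 : ℝ) / (1 + (κ : ℝ))))) := by
  set p : ℝ := (1 : ℝ) / (1 + (κ : ℝ)) with hpdef
  have hq : (0:ℝ) < 1 + (κ:ℝ) := by positivity
  have hppos : 0 < p := by positivity
  have h5 : (1:ℝ) ≤ 5^κ := one_le_pow₀ (by norm_num)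
  have hup : 0 ≤ u ^ p := Real.rpow_nonneg hu p
  split_ifs with hcond
  · rcases le_or_gt (u^p) a with hA | hA
    · have h0 : 0 ≤ u/t^κ := by positivity
      nlinarith
    · rcases eq_or_lt_of_le hu with h0 | hu0
      · have hz : u ^ p = 0 := by rw [← h0, Real.zero_rpow (ne_of_gt hppos)]
        rw [hz]
        have : 0 ≤ u / t^κ := by positivity
        nlinarith
      · have ht5 : t ≤ 5 * u^p := by linarith
        have hupos : 0 < u^p := Real.rpow_pos_of_pos hu0 p
        have htpos : 0 < t := lt_of_lt_of_le hupos hcond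
        have htk : 0 < t^κ := pow_pos htpos κ
        have hmain : u^p * t^κ ≤ 5^κ * u := by
          have h1 : t^κ ≤ 5^κ * (u^p)^κ := by
            calc t^κ ≤ (5*u^p)^κ := pow_le_pow_left₀ ht ht5 κ
            _ = 5^κ * (u^p)^κ := mul_pow 5 (u^p) κ
          have h2 : u^p * (u^p)^κ = u := by
            rw [← Real.rpow_natCast (u^p) κ, ← Real.rpow_mul hu, ← Real.rpow_add hu0]
            rw [show p + p * (κ:ℝ) = 1 by rw [hpdef]; field_simp]
            exact Real.rpow_one u
          nlinarith
        have hfin : u^p ≤ 5^κ * (u/t^κ) := by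
          rw [mul_div_assoc' (5^κ) u (t^κ), le_div_iff₀ htk]
          exact hmain
        have h0 : 0 ≤ (5:ℝ)^κ * a := by positivity
        linarith
  · nlinarith

/-- Quasi-triangle inequality for the second-component term of the Grushin quasi-metric. -/
lemma gd_key2 (κ : ℕ) (A B R S T W U V : ℝ)
    (hA : 0 ≤ A) (hB : 0 ≤ B) (hR : 0 ≤ R) (hS : 0 ≤ S) (hT : 0 ≤ T) (hW : 0 ≤ W)
    (hU : 0 ≤ U) (hV : 0 ≤ V)
    (hRUV : R ≤ U + V)
    (hT1 : T ≤ 2*S + A) (hT2 : S - B ≤ T) (hT3 : T ≤ S + B)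
    (hW1 : W ≤ 2*S + B) (hW2 : S - A ≤ W) (hW3 : W ≤ S + A) :
    (if R ^ ((1 : ℝ) / (1 + (κ : ℝ))) ≤ S then R / S^κ
      else R ^ ((1 : ℝ) / (1 + (κ : ℝ)))) ≤
    (4 + 2*5^κ) *
      ((A + (if U ^ ((1 : ℝ) / (1 + (κ : ℝ))) ≤ T then U / T^κ
        else U ^ ((1 : ℝ) / (1 + (κ : ℝ))))) +
       (B + (if V ^ ((1 : ℝ) / (1 + (κ : ℝ))) ≤ W then V / W^κ
        else V ^ ((1 : ℝ) / (1 + (κ : ℝ)))))) := by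
  set p : ℝ := (1 : ℝ) / (1 + (κ : ℝ)) with hpdef
  have hq : (0:ℝ) < 1 + (κ:ℝ) := by positivity
  have hppos : 0 < p := by positivity
  have hple1 : p ≤ 1 := by
    rw [hpdef, div_le_one hq]; linarith [Nat.cast_nonneg (α := ℝ) κ]
  have h5 : (1:ℝ) ≤ (5:ℝ)^κ := one_le_pow₀ (by norm_num)
  have h5n : (0:ℝ) ≤ (5:ℝ)^κ := by positivity
  set m₁ : ℝ := (if U ^ p ≤ T then U / T^κ else U ^ p) with hm1def
  set m₂ : ℝ := (if V ^ p ≤ W then V / W^κ else V ^ p) with hm2def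
  have hm1 : 0 ≤ m₁ := by rw [hm1def]; split_ifs <;> positivity
  have hm2 : 0 ≤ m₂ := by rw [hm2def]; split_ifs <;> positivity
  set M : ℝ := (A + m₁) + (B + m₂) with hMdef
  have hM : 0 ≤ M := by positivity
  clear_value M m₂ m₁
  split_ifs with hc
  · -- R^p ≤ S : value is R / S^κ
    have hRS : R ≤ S^κ * S := by
      have h1 : (R^p)^((1:ℝ)+(κ:ℝ)) ≤ S^((1:ℝ)+(κ:ℝ)) :=
        Real.rpow_le_rpow (Real.rpow_nonneg hR p) hc (by positivity)
      have h2 : (R^p)^((1:ℝ)+(κ:ℝ)) = R := by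
        rw [← Real.rpow_mul hR, show p * (1 + (κ:ℝ)) = 1 by rw [hpdef]; field_simp,
          Real.rpow_one]
      have h3 : S^((1:ℝ)+(κ:ℝ)) = S^κ * S := by
        rw [show (1:ℝ)+(κ:ℝ) = ((κ+1 : ℕ):ℝ) by push_cast; ring, Real.rpow_natCast, pow_succ]
      rw [h2, h3] at h1; exact h1
    have hmS : R / S^κ ≤ S := by
      rcases eq_or_lt_of_le hS with h0 | hS0
      · rw [← h0, mul_zero] at hRS
        have hR0 : R = 0 := le_antisymm hRS hR
        rw [hR0, zero_div]
        exact hS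
      · rw [div_le_iff₀ (pow_pos hS0 κ)]; linarith
    rcases le_or_gt S (4*M) with h4 | h4
    · have f3 : 0 ≤ (5:ℝ)^κ*M := mul_nonneg h5n hM
      have f4 : (4+2*5^κ)*M = 4*M + 2*(5^κ*M) := by ring
      rw [f4]; linarith
    · -- 4M < S : all pieces are small compared to S
      have hS0 : 0 < S := lt_of_le_of_lt (by positivity) h4
      have hAs : A < S/4 := by linarith
      have hBs : B < S/4 := by linarith
      have hm1s : m₁ < S/4 := by linarith
      have hm2s : m₂ < S/4 := by linarith
      have hTlb : 3*S/4 < T := by linarith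
      have hWlb : 3*S/4 < W := by linarith
      have hT2S : T ≤ 2*S := by linarith
      have hW2S : W ≤ 2*S := by linarith
      have hcondU : U ^ p ≤ T := by
        by_contra h
        have he : m₁ = U^p := by rw [hm1def, if_neg h]
        push_neg at h
        linarith [he ▸ hm1s]
      have hcondV : V ^ p ≤ W := by
        by_contra h
        have he : m₂ = V^p := by rw [hm2def, if_neg h]
        push_neg at h
        linarith [he ▸ hm2s]
      have hm1eq : m₁ = U / T^κ := by rw [hm1def, if_pos hcondU]
      have hm2eq : m₂ = V / W^κ := by rw [hm2def, if_pos hcondV]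
      have hTpos : 0 < T := by linarith
      have hWpos : 0 < W := by linarith
      have hSk : 0 < S^κ := pow_pos hS0 κ
      have hTk : 0 < T^κ := pow_pos hTpos κ
      have hWk : 0 < W^κ := pow_pos hWpos κ
      have hTk2 : T^κ ≤ 2^κ * S^κ := by
        calc T^κ ≤ (2*S)^κ := pow_le_pow_left₀ hT hT2S κ
        _ = 2^κ * S^κ := mul_pow 2 S κ
      have hWk2 : W^κ ≤ 2^κ * S^κ := by
        calc W^κ ≤ (2*S)^κ := pow_le_pow_left₀ hW hW2S κ
        _ = 2^κ * S^κ := mul_pow 2 S κ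
      have hu2 : U/S^κ ≤ 2^κ * (U/T^κ) := by
        rw [show (2:ℝ)^κ * (U/T^κ) = (2^κ*U)/T^κ by ring, div_le_div_iff₀ hSk hTk]
        calc U * T^κ ≤ U * (2^κ * S^κ) := mul_le_mul_of_nonneg_left hTk2 hU
        _ = 2^κ * U * S^κ := by ring
      have hv2 : V/S^κ ≤ 2^κ * (V/W^κ) := by
        rw [show (2:ℝ)^κ * (V/W^κ) = (2^κ*V)/W^κ by ring, div_le_div_iff₀ hSk hWk]
        calc V * W^κ ≤ V * (2^κ * S^κ) := mul_le_mul_of_nonneg_left hWk2 hV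
        _ = 2^κ * V * S^κ := by ring
      have h25 : (2:ℝ)^κ ≤ (5:ℝ)^κ := pow_le_pow_left₀ (by norm_num) (by norm_num) κ
      have h2n : (0:ℝ) ≤ (2:ℝ)^κ := by positivity
      have hsum : R / S^κ ≤ 2^κ * (m₁ + m₂) := by
        have hstep : R / S^κ ≤ (U+V)/S^κ := by gcongr
        rw [add_div] at hstep
        rw [hm1eq, hm2eq, mul_add]
        linarith
      have hmm : m₁ + m₂ ≤ M := by linarith
      have f1 : 2^κ*(m₁+m₂) ≤ 2^κ*M := mul_le_mul_of_nonneg_left hmm h2n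
      have f2 : (2:ℝ)^κ*M ≤ 5^κ*M := mul_le_mul_of_nonneg_right h25 hM
      have f3 : 0 ≤ (5:ℝ)^κ*M := mul_nonneg h5n hM
      have f4 : (4+2*5^κ)*M = 4*M + 2*(5^κ*M) := by ring
      rw [f4]; linarith
  · -- S < R^p : value is R^p
    push_neg at hc
    rcases le_total V U with hVU | hUV
    · have hRp2 : R^p ≤ 2 * U^p := by
        have c1 : R^p ≤ (U+V)^p := Real.rpow_le_rpow hR hRUV hppos.le
        have c2 : (U+V)^p ≤ (2*U)^p := Real.rpow_le_rpow (by linarith) (by linarith) hppos.le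
        have c3 : (2*U)^p = 2^p * U^p := Real.mul_rpow (by norm_num) hU
        have c4 : (2:ℝ)^p ≤ 2 := by
          calc (2:ℝ)^p ≤ (2:ℝ)^(1:ℝ) := Real.rpow_le_rpow_of_exponent_le one_le_two hple1
          _ = 2 := Real.rpow_one 2
        nlinarith [Real.rpow_nonneg hU p]
      have hk1 := gd_key1 κ U T A S hU hT hA hT1 (by linarith)
      rw [← hpdef, ← hm1def] at hk1
      have hAm : A + m₁ ≤ M := by linarith
      have g1 : (5:ℝ)^κ*(A+m₁) ≤ 5^κ*M := mul_le_mul_of_nonneg_left hAm h5n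
      have g2 : (4+2*5^κ)*M = 4*M + 2*(5^κ*M) := by ring
      rw [g2]; linarith
    · have hRp2 : R^p ≤ 2 * V^p := by
        have c1 : R^p ≤ (U+V)^p := Real.rpow_le_rpow hR hRUV hppos.le
        have c2 : (U+V)^p ≤ (2*V)^p := Real.rpow_le_rpow (by linarith) (by linarith) hppos.le
        have c3 : (2*V)^p = 2^p * V^p := Real.mul_rpow (by norm_num) hV
        have c4 : (2:ℝ)^p ≤ 2 := by
          calc (2:ℝ)^p ≤ (2:ℝ)^(1:ℝ) := Real.rpow_le_rpow_of_exponent_le one_le_two hple1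
          _ = 2 := Real.rpow_one 2
        nlinarith [Real.rpow_nonneg hV p]
      have hk1 := gd_key1 κ V W B S hV hW hB hW1 (by linarith)
      rw [← hpdef, ← hm2def] at hk1
      have hBm : B + m₂ ≤ M := by linarith
      have g1 : (5:ℝ)^κ*(B+m₂) ≤ 5^κ*M := mul_le_mul_of_nonneg_left hBm h5n
      have g2 : (4+2*5^κ)*M = 4*M + 2*(5^κ*M) := by ring
      rw [g2]; linarith

lemma gd_m_nonneg (κ : ℕ) (r s : ℝ) (hr : 0 ≤ r) (hs : 0 ≤ s) :
    0 ≤ if r ^ ((1 : ℝ) / (1 + (κ : ℝ))) ≤ s then r / s^κ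
      else r ^ ((1 : ℝ) / (1 + (κ : ℝ))) := by
  split_ifs <;> positivity

/-- The Grushin distance `d` is a quasi-metric: nonnegative, symmetric, vanishing exactly on
the diagonal, and satisfying a quasi-triangle inequality with some constant `C₀ ≥ 1`. -/
theorem grushin_quasi_metric (n₁ n₂ κ : ℕ) (hn₁ : 1 ≤ n₁) (hn₂ : 1 ≤ n₂) (hκ : 1 ≤ κ) :
    (∀ x y : GS n₁ n₂, 0 ≤ gd n₁ n₂ κ x y) ∧
    (∀ x y : GS n₁ n₂, gd n₁ n₂ κ x y = gd n₁ n₂ κ y x) ∧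
    (∀ x y : GS n₁ n₂, gd n₁ n₂ κ x y = 0 ↔ x = y) ∧
    (∃ C₀ : ℝ, 1 ≤ C₀ ∧ ∀ x y z : GS n₁ n₂,
      gd n₁ n₂ κ x y ≤ C₀ * (gd n₁ n₂ κ x z + gd n₁ n₂ κ z y)) := by
  have hq : (0:ℝ) < 1 + (κ:ℝ) := by positivity
  have hppos : (0:ℝ) < (1 : ℝ) / (1 + (κ : ℝ)) := by positivity
  have hpne : (1 : ℝ) / (1 + (κ : ℝ)) ≠ 0 := ne_of_gt hppos
  refine ⟨?_, ?_, ?_, ?_⟩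
  · intro x y
    unfold gd
    have h1 : (0:ℝ) ≤ ‖x.1 - y.1‖ := norm_nonneg _
    have h2 := gd_m_nonneg κ ‖x.2 - y.2‖ (‖x.1‖ + ‖y.1‖) (norm_nonneg _) (by positivity)
    linarith
  · intro x y
    unfold gd
    rw [norm_sub_rev x.1 y.1, norm_sub_rev x.2 y.2, add_comm ‖x.1‖ ‖y.1‖]
  · intro x y
    constructor
    · intro h
      unfold gd at h
      have h1 : (0:ℝ) ≤ ‖x.1 - y.1‖ := norm_nonneg _
      have h2 := gd_m_nonneg κ ‖x.2 - y.2‖ (‖x.1‖ + ‖y.1‖) (norm_nonneg _) (by positivity)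
      have e1 : ‖x.1 - y.1‖ = 0 := by linarith
      have e2 : (if ‖x.2 - y.2‖ ^ ((1 : ℝ) / (1 + (κ : ℝ))) ≤ ‖x.1‖ + ‖y.1‖ then
          ‖x.2 - y.2‖ / (‖x.1‖ + ‖y.1‖) ^ κ
        else ‖x.2 - y.2‖ ^ ((1 : ℝ) / (1 + (κ : ℝ)))) = 0 := by linarith
      have hx1 : x.1 = y.1 := by rwa [norm_sub_eq_zero_iff] at e1
      have hx2 : x.2 = y.2 := by
        rw [← norm_sub_eq_zero_iff]
        split_ifs at e2 with hcnd
        · rcases div_eq_zero_iff.mp e2 with h0 | h0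
          · exact h0
          · have hs0 : ‖x.1‖ + ‖y.1‖ = 0 :=
              pow_eq_zero_iff (by omega : κ ≠ 0) |>.mp h0
            rw [hs0] at hcnd
            have hz : ‖x.2 - y.2‖ ^ ((1 : ℝ) / (1 + (κ : ℝ))) = 0 :=
              le_antisymm hcnd (Real.rpow_nonneg (norm_nonneg _) _)
            exact (Real.rpow_eq_zero (norm_nonneg _) hpne).mp hz
        · exact (Real.rpow_eq_zero (norm_nonneg _) hpne).mp e2
      exact Prod.ext hx1 hx2
    · rintro rfl
      have hpne' : ((1:ℝ) + (κ:ℝ))⁻¹ ≠ 0 := by positivity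
      simp [gd, Real.zero_rpow hpne, Real.zero_rpow hpne']
  · refine ⟨5 + 2*5^κ, ?_, ?_⟩
    · have h5 : (0:ℝ) ≤ 5^κ := by positivity
      linarith
    · intro x y z
      have e1 := abs_norm_sub_norm_le x.1 z.1
      have e2 := abs_norm_sub_norm_le z.1 y.1
      rw [abs_le] at e1 e2
      obtain ⟨e1a, e1b⟩ := e1
      obtain ⟨e2a, e2b⟩ := e2
      have nx : (0:ℝ) ≤ ‖x.1‖ := norm_nonneg _
      have ny : (0:ℝ) ≤ ‖y.1‖ := norm_nonneg _
      have nz : (0:ℝ) ≤ ‖z.1‖ := norm_nonneg _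
      have d1 : ‖x.1 - y.1‖ ≤ ‖x.1 - z.1‖ + ‖z.1 - y.1‖ := by
        simpa [dist_eq_norm] using dist_triangle x.1 z.1 y.1
      have d2 : ‖x.2 - y.2‖ ≤ ‖x.2 - z.2‖ + ‖z.2 - y.2‖ := by
        simpa [dist_eq_norm] using dist_triangle x.2 z.2 y.2
      have key := gd_key2 κ ‖x.1 - z.1‖ ‖z.1 - y.1‖ ‖x.2 - y.2‖ (‖x.1‖ + ‖y.1‖)
        (‖x.1‖ + ‖z.1‖) (‖z.1‖ + ‖y.1‖) ‖x.2 - z.2‖ ‖z.2 - y.2‖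
        (norm_nonneg _) (norm_nonneg _) (norm_nonneg _) (by positivity) (by positivity)
        (by positivity) (norm_nonneg _) (norm_nonneg _) d2
        (by linarith) (by linarith) (by linarith)
        (by linarith) (by linarith) (by linarith)
      have n1 := gd_m_nonneg κ ‖x.2 - z.2‖ (‖x.1‖ + ‖z.1‖) (norm_nonneg _) (by positivity)
      have n2 := gd_m_nonneg κ ‖z.2 - y.2‖ (‖z.1‖ + ‖y.1‖) (norm_nonneg _) (by positivity)
      unfold gd
      rw [show (5 + 2*(5:ℝ)^κ) *
          ((‖x.1 - z.1‖ + (if ‖x.2 - z.2‖ ^ ((1 : ℝ) / (1 + (κ : ℝ))) ≤ ‖x.1‖ + ‖z.1‖ then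
              ‖x.2 - z.2‖ / (‖x.1‖ + ‖z.1‖) ^ κ
            else ‖x.2 - z.2‖ ^ ((1 : ℝ) / (1 + (κ : ℝ))))) +
           (‖z.1 - y.1‖ + (if ‖z.2 - y.2‖ ^ ((1 : ℝ) / (1 + (κ : ℝ))) ≤ ‖z.1‖ + ‖y.1‖ then
              ‖z.2 - y.2‖ / (‖z.1‖ + ‖y.1‖) ^ κ
            else ‖z.2 - y.2‖ ^ ((1 : ℝ) / (1 + (κ : ℝ)))))) =
          ((‖x.1 - z.1‖ + (if ‖x.2 - z.2‖ ^ ((1 : ℝ) / (1 + (κ : ℝ))) ≤ ‖x.1‖ + ‖z.1‖ then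
              ‖x.2 - z.2‖ / (‖x.1‖ + ‖z.1‖) ^ κ
            else ‖x.2 - z.2‖ ^ ((1 : ℝ) / (1 + (κ : ℝ))))) +
           (‖z.1 - y.1‖ + (if ‖z.2 - y.2‖ ^ ((1 : ℝ) / (1 + (κ : ℝ))) ≤ ‖z.1‖ + ‖y.1‖ then
              ‖z.2 - y.2‖ / (‖z.1‖ + ‖y.1‖) ^ κ
            else ‖z.2 - y.2‖ ^ ((1 : ℝ) / (1 + (κ : ℝ)))))) +
          (4 + 2*(5:ℝ)^κ) *
          ((‖x.1 - z.1‖ + (if ‖x.2 - z.2‖ ^ ((1 : ℝ) / (1 + (κ : ℝ))) ≤ ‖x.1‖ + ‖z.1‖ then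
              ‖x.2 - z.2‖ / (‖x.1‖ + ‖z.1‖) ^ κ
            else ‖x.2 - z.2‖ ^ ((1 : ℝ) / (1 + (κ : ℝ))))) +
           (‖z.1 - y.1‖ + (if ‖z.2 - y.2‖ ^ ((1 : ℝ) / (1 + (κ : ℝ))) ≤ ‖z.1‖ + ‖y.1‖ then
              ‖z.2 - y.2‖ / (‖z.1‖ + ‖y.1‖) ^ κ
            else ‖z.2 - y.2‖ ^ ((1 : ℝ) / (1 + (κ : ℝ)))))) from by ring]
      linarith
end

section
/- The metric measure space (ℝ^{n₁+n₂}, d) is complete: every sequence (x_m) with d(x_m, x_k) → 0 as m,k → ∞ converges to some point x with d(x_m, x) → 0. -/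
open MeasureTheory Filter Topology

lemma gd_if_nonneg (n₁ n₂ κ : ℕ) (x y : GS n₁ n₂) :
    0 ≤ (if ‖x.2 - y.2‖ ^ ((1 : ℝ) / (1 + (κ : ℝ))) ≤ ‖x.1‖ + ‖y.1‖ then
      ‖x.2 - y.2‖ / (‖x.1‖ + ‖y.1‖) ^ κ
    else ‖x.2 - y.2‖ ^ ((1 : ℝ) / (1 + (κ : ℝ)))) := by
  split_ifs with h
  · positivity
  · positivity

lemma gd_nonneg (n₁ n₂ κ : ℕ) (x y : GS n₁ n₂) : 0 ≤ gd n₁ n₂ κ x y :=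
  add_nonneg (norm_nonneg _) (gd_if_nonneg n₁ n₂ κ x y)

lemma fst_le_gd (n₁ n₂ κ : ℕ) (x y : GS n₁ n₂) : ‖x.1 - y.1‖ ≤ gd n₁ n₂ κ x y :=
  le_add_of_nonneg_right (gd_if_nonneg n₁ n₂ κ x y)

lemma if_le_gd (n₁ n₂ κ : ℕ) (x y : GS n₁ n₂) :
    (if ‖x.2 - y.2‖ ^ ((1 : ℝ) / (1 + (κ : ℝ))) ≤ ‖x.1‖ + ‖y.1‖ then
      ‖x.2 - y.2‖ / (‖x.1‖ + ‖y.1‖) ^ κ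
    else ‖x.2 - y.2‖ ^ ((1 : ℝ) / (1 + (κ : ℝ)))) ≤ gd n₁ n₂ κ x y :=
  le_add_of_nonneg_left (norm_nonneg _)

lemma exp_sum (κ : ℕ) : (1:ℝ)/(1+(κ:ℝ)) + (κ:ℝ)/(1+(κ:ℝ)) = 1 := by
  have h : (1:ℝ) + (κ:ℝ) ≠ 0 := by positivity
  field_simp

/-- Upper bound: `gd x y ≤ ‖Δ₁‖ + ‖Δ₂‖^(1/(1+κ))`. -/
lemma gd_le (n₁ n₂ κ : ℕ) (x y : GS n₁ n₂) :
    gd n₁ n₂ κ x y ≤ ‖x.1 - y.1‖ + ‖x.2 - y.2‖ ^ ((1 : ℝ) / (1 + (κ : ℝ))) := by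
  unfold gd
  apply add_le_add_right
  split_ifs with h
  · set D := ‖x.2 - y.2‖ with hDdef
    set s := ‖x.1‖ + ‖y.1‖ with hsdef
    have hD0 : 0 ≤ D := norm_nonneg _
    have hs0 : 0 ≤ s := add_nonneg (norm_nonneg _) (norm_nonneg _)
    have hc : (0:ℝ) < 1 / (1 + (κ:ℝ)) := by positivity
    rcases eq_or_lt_of_le hs0 with hse | hsp
    · have h0 : D ^ ((1:ℝ)/(1+(κ:ℝ))) = 0 :=
        le_antisymm (hse ▸ h) (Real.rpow_nonneg hD0 _)
      have hDz : D = 0 := by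
        by_contra hne
        have hDpos : (0:ℝ) < D := lt_of_le_of_ne hD0 (Ne.symm hne)
        exact absurd h0 (ne_of_gt (Real.rpow_pos_of_pos hDpos _))
      simp [hDz]
      positivity
    · rw [div_le_iff₀ (by positivity)]
      have h1 : D ^ ((κ:ℝ)/(1+(κ:ℝ))) ≤ s ^ κ := by
        have h2 : (D ^ ((1:ℝ)/(1+(κ:ℝ)))) ^ κ ≤ s ^ κ :=
          pow_le_pow_left₀ (Real.rpow_nonneg hD0 _) h κ
        calc D ^ ((κ:ℝ)/(1+(κ:ℝ)))
            = D ^ ((1:ℝ)/(1+(κ:ℝ)) * (κ:ℝ)) := by ring_nf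
          _ = (D ^ ((1:ℝ)/(1+(κ:ℝ)))) ^ (κ:ℝ) := Real.rpow_mul hD0 _ _
          _ = (D ^ ((1:ℝ)/(1+(κ:ℝ)))) ^ κ := Real.rpow_natCast _ κ
          _ ≤ s ^ κ := h2
      calc D = D ^ ((1:ℝ)/(1+(κ:ℝ)) + (κ:ℝ)/(1+(κ:ℝ))) := by
              rw [exp_sum κ, Real.rpow_one]
        _ = D ^ ((1:ℝ)/(1+(κ:ℝ))) * D ^ ((κ:ℝ)/(1+(κ:ℝ))) :=
              Real.rpow_add' hD0 (by rw [exp_sum κ]; norm_num)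
        _ ≤ D ^ ((1:ℝ)/(1+(κ:ℝ))) * s ^ κ :=
              mul_le_mul_of_nonneg_left h1 (Real.rpow_nonneg hD0 _)
  · exact le_refl _

/-- Lower bound: from bounded first components, `‖Δ₂‖` is controlled by `gd`. -/
lemma snd_le_gd (n₁ n₂ κ : ℕ) (M : ℝ) (x y : GS n₁ n₂)
    (hx : ‖x.1‖ ≤ M) (hy : ‖y.1‖ ≤ M) :
    ‖x.2 - y.2‖ ≤ (2*M)^κ * gd n₁ n₂ κ x y + (gd n₁ n₂ κ x y)^(1+κ) := by
  have hM0 : 0 ≤ M := le_trans (norm_nonneg _) hx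
  have hg0 : 0 ≤ gd n₁ n₂ κ x y := gd_nonneg n₁ n₂ κ x y
  have ht := if_le_gd n₁ n₂ κ x y
  set D := ‖x.2 - y.2‖ with hDdef
  set s := ‖x.1‖ + ‖y.1‖ with hsdef
  have hD0 : 0 ≤ D := norm_nonneg _
  have hs0 : 0 ≤ s := add_nonneg (norm_nonneg _) (norm_nonneg _)
  have hs2M : s ≤ 2*M := by rw [hsdef]; linarith
  by_cases h : D ^ ((1:ℝ)/(1+(κ:ℝ))) ≤ s
  · rw [if_pos h] at ht
    rcases eq_or_lt_of_le hs0 with hse | hsp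
    · have h0 : D ^ ((1:ℝ)/(1+(κ:ℝ))) = 0 :=
        le_antisymm (hse ▸ h) (Real.rpow_nonneg hD0 _)
      have hDz : D = 0 := by
        by_contra hne
        have hDpos : (0:ℝ) < D := lt_of_le_of_ne hD0 (Ne.symm hne)
        exact absurd h0 (ne_of_gt (Real.rpow_pos_of_pos hDpos _))
      rw [hDz]
      positivity
    · have hsk : (0:ℝ) < s ^ κ := by positivity
      have hD : D = (D / s ^ κ) * s ^ κ := (div_mul_cancel₀ D (ne_of_gt hsk)).symm
      calc D = (D / s ^ κ) * s ^ κ := hD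
        _ ≤ gd n₁ n₂ κ x y * (2*M)^κ := by
            apply mul_le_mul ht (pow_le_pow_left₀ hs0 hs2M κ) (le_of_lt hsk) hg0
        _ = (2*M)^κ * gd n₁ n₂ κ x y := mul_comm _ _
        _ ≤ (2*M)^κ * gd n₁ n₂ κ x y + (gd n₁ n₂ κ x y)^(1+κ) :=
            le_add_of_nonneg_right (by positivity)
  · rw [if_neg h] at ht
    have hD : D = (D ^ ((1:ℝ)/(1+(κ:ℝ)))) ^ (1+κ) := by
      rw [← Real.rpow_natCast (D ^ ((1:ℝ)/(1+(κ:ℝ)))) (1+κ), ← Real.rpow_mul hD0]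
      have : (1:ℝ)/(1+(κ:ℝ)) * ((1+κ : ℕ) : ℝ) = 1 := by
        push_cast
        field_simp
      rw [this, Real.rpow_one]
    calc D = (D ^ ((1:ℝ)/(1+(κ:ℝ)))) ^ (1+κ) := hD
      _ ≤ (gd n₁ n₂ κ x y)^(1+κ) :=
          pow_le_pow_left₀ (Real.rpow_nonneg hD0 _) ht (1+κ)
      _ ≤ (2*M)^κ * gd n₁ n₂ κ x y + (gd n₁ n₂ κ x y)^(1+κ) :=
          le_add_of_nonneg_left (by positivity)


/-- Completeness of `(ℝ^{n₁+n₂}, d)` for the Grushin quasi-metric: every sequence which is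
Cauchy with respect to `d` (i.e. `d(x_m, x_k) → 0` as `m, k → ∞`) converges to some point
`a` with `d(x_m, a) → 0`. -/
theorem grushin_complete (n₁ n₂ κ : ℕ) (hκ : 1 ≤ κ)
    (x : ℕ → GS n₁ n₂)
    (hcauchy : Tendsto (fun p : ℕ × ℕ => gd n₁ n₂ κ (x p.1) (x p.2)) atTop (nhds 0)) :
    ∃ a : GS n₁ n₂, Tendsto (fun m => gd n₁ n₂ κ (x m) a) atTop (nhds 0) := by
  -- first components are Cauchy
  have h1 : CauchySeq (fun m => (x m).1) := by
    rw [cauchySeq_iff_tendsto_dist_atTop_0]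
    apply squeeze_zero (fun p => dist_nonneg) (fun p => ?_) hcauchy
    rw [dist_eq_norm]
    exact fst_le_gd n₁ n₂ κ (x p.1) (x p.2)
  -- hence bounded
  obtain ⟨M, hM⟩ : ∃ M, ∀ m, ‖(x m).1‖ ≤ M := by
    obtain ⟨R, hR⟩ := h1.isBounded_range.exists_norm_le
    exact ⟨R, fun m => hR _ (Set.mem_range_self m)⟩
  -- second components are Cauchy
  have h2 : CauchySeq (fun m => (x m).2) := by
    rw [cauchySeq_iff_tendsto_dist_atTop_0]
    have hbd : Tendsto (fun p : ℕ × ℕ =>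
        (2*M)^κ * gd n₁ n₂ κ (x p.1) (x p.2) + (gd n₁ n₂ κ (x p.1) (x p.2))^(1+κ))
        atTop (nhds 0) := by
      have := ((hcauchy.const_mul ((2*M)^κ)).add (hcauchy.pow (1+κ)))
      simpa using this
    apply squeeze_zero (fun p => dist_nonneg)
      (fun p => by
        rw [dist_eq_norm]
        exact snd_le_gd n₁ n₂ κ M (x p.1) (x p.2) (hM p.1) (hM p.2)) hbd
  -- the sequence converges in the product space
  have hx : CauchySeq x := by
    have := h1.prodMk h2
    simpa using this
  obtain ⟨a, ha⟩ := cauchySeq_tendsto_of_complete hx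
  refine ⟨a, ?_⟩
  -- first components converge in norm
  have ha1 : Tendsto (fun m => ‖(x m).1 - a.1‖) atTop (nhds 0) := by
    have : Tendsto (fun m => (x m).1) atTop (nhds a.1) :=
      (continuous_fst.tendsto a).comp ha
    simpa [dist_eq_norm] using (tendsto_iff_dist_tendsto_zero.mp this)
  have ha2 : Tendsto (fun m => ‖(x m).2 - a.2‖) atTop (nhds 0) := by
    have : Tendsto (fun m => (x m).2) atTop (nhds a.2) :=
      (continuous_snd.tendsto a).comp ha
    simpa [dist_eq_norm] using (tendsto_iff_dist_tendsto_zero.mp this)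
  -- squeeze using the upper bound
  apply squeeze_zero (fun m => gd_nonneg n₁ n₂ κ (x m) a)
    (fun m => gd_le n₁ n₂ κ (x m) a)
  have hrpow : Tendsto (fun m => ‖(x m).2 - a.2‖ ^ ((1:ℝ)/(1+(κ:ℝ)))) atTop (nhds 0) := by
    have hc : (0:ℝ) < 1/(1+(κ:ℝ)) := by positivity
    have hcont : ContinuousAt (fun t : ℝ => t ^ ((1:ℝ)/(1+(κ:ℝ)))) 0 :=
      Real.continuousAt_rpow_const 0 _ (Or.inr hc.le)
    have h0 : (0:ℝ) ^ ((1:ℝ)/(1+(κ:ℝ))) = 0 := Real.zero_rpow (ne_of_gt hc)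
    have := hcont.tendsto.comp ha2
    rw [Function.comp_def] at this
    simp only [h0] at this
    exact this
  simpa using ha1.add hrpow
end

section
/- For every Cauchy sequence (x_m) in the Grushin quasi-metric d, if the first components x_m' converge in Euclidean norm to some x' ∈ ℝ^{n₁}, then the second components x_m'' form a Cauchy sequence in the Euclidean norm of ℝ^{n₂}. -/
open MeasureTheory Filter Topology

/-- If `(x_m)` is Cauchy for the Grushin quasi-metric `d` and the first components `x_m'`
converge in Euclidean norm to some `x'`, then the second components `x_m''` form a Cauchy
sequence in the Euclidean norm of `ℝ^{n₂}`. -/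
theorem grushin_second_component_cauchy (n₁ n₂ κ : ℕ) (hκ : 1 ≤ κ)
    (x : ℕ → GS n₁ n₂)
    (hcauchy : Tendsto (fun p : ℕ × ℕ => gd n₁ n₂ κ (x p.1) (x p.2)) atTop (nhds 0))
    (x' : EuclideanSpace ℝ (Fin n₁))
    (hconv : Tendsto (fun m => (x m).1) atTop (nhds x')) :
    CauchySeq (fun m => (x m).2) := by
  obtain ⟨M, hM⟩ := hconv.norm.bddAbove_range
  have hM' : ∀ m, ‖(x m).1‖ ≤ M := fun m => hM (Set.mem_range_self m)
  have hM0 : 0 ≤ M := le_trans (norm_nonneg _) (hM' 0)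
  set g : ℕ × ℕ → ℝ := fun p => gd n₁ n₂ κ (x p.1) (x p.2) with hgdef
  have hg0 : ∀ p, 0 ≤ g p := by
    intro p
    have h1 : (0:ℝ) ≤ ‖(x p.1).1 - (x p.2).1‖ := norm_nonneg _
    have h2 : (0:ℝ) ≤ if ‖(x p.1).2 - (x p.2).2‖ ^ ((1 : ℝ) / (1 + (κ : ℝ))) ≤ ‖(x p.1).1‖ + ‖(x p.2).1‖ then
        ‖(x p.1).2 - (x p.2).2‖ / (‖(x p.1).1‖ + ‖(x p.2).1‖) ^ κ
      else ‖(x p.1).2 - (x p.2).2‖ ^ ((1 : ℝ) / (1 + (κ : ℝ))) := by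
      split
      · exact div_nonneg (norm_nonneg _) (by positivity)
      · exact Real.rpow_nonneg (norm_nonneg _) _
    simpa [hgdef, gd] using add_nonneg h1 h2
  have key : ∀ p : ℕ × ℕ, ‖(x p.1).2 - (x p.2).2‖ ≤ (2*M)^κ * g p + (g p)^(1+κ) := by
    intro p
    have hd2 : (0:ℝ) ≤ ‖(x p.1).2 - (x p.2).2‖ := norm_nonneg _
    have ha : (0:ℝ) ≤ ‖(x p.1).1‖ + ‖(x p.2).1‖ := by positivity
    have ha2M : ‖(x p.1).1‖ + ‖(x p.2).1‖ ≤ 2*M := by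
      have := hM' p.1; have := hM' p.2; linarith
    have hrhs0 : (0:ℝ) ≤ (2*M)^κ * g p :=
      mul_nonneg (pow_nonneg (by linarith) κ) (hg0 p)
    have hrhs1 : (0:ℝ) ≤ (g p)^(1+κ) := pow_nonneg (hg0 p) _
    by_cases hc : ‖(x p.1).2 - (x p.2).2‖ ^ ((1 : ℝ) / (1 + (κ : ℝ))) ≤ ‖(x p.1).1‖ + ‖(x p.2).1‖
    · have hS : ‖(x p.1).2 - (x p.2).2‖ / (‖(x p.1).1‖ + ‖(x p.2).1‖) ^ κ ≤ g p := by
        have : g p = ‖(x p.1).1 - (x p.2).1‖ +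
            ‖(x p.1).2 - (x p.2).2‖ / (‖(x p.1).1‖ + ‖(x p.2).1‖) ^ κ := by
          simp only [hgdef]; unfold gd; rw [if_pos hc]
        rw [this]
        exact le_add_of_nonneg_left (norm_nonneg _)
      rcases eq_or_lt_of_le ha with ha0 | ha0
      · -- denominator zero: then d2 = 0
        have h0 : ‖(x p.1).2 - (x p.2).2‖ ^ ((1 : ℝ) / (1 + (κ : ℝ))) = 0 :=
          le_antisymm (by rw [← ha0] at hc; exact hc) (Real.rpow_nonneg hd2 _)
        have hκ0 : (1 : ℝ) / (1 + (κ : ℝ)) ≠ 0 := by positivity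
        have : ‖(x p.1).2 - (x p.2).2‖ = 0 := by
          by_contra h
          exact h ((Real.rpow_eq_zero hd2 hκ0).mp h0)
        rw [this]; positivity
      · have hpow : (0:ℝ) < (‖(x p.1).1‖ + ‖(x p.2).1‖) ^ κ := by positivity
        have := (div_le_iff₀ hpow).mp hS
        calc ‖(x p.1).2 - (x p.2).2‖ ≤ g p * (‖(x p.1).1‖ + ‖(x p.2).1‖) ^ κ := this
          _ ≤ g p * (2*M)^κ := by
              exact mul_le_mul_of_nonneg_left (pow_le_pow_left₀ ha ha2M κ) (hg0 p)
          _ = (2*M)^κ * g p := mul_comm _ _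
          _ ≤ (2*M)^κ * g p + (g p)^(1+κ) := le_add_of_nonneg_right hrhs1
    · have hS : ‖(x p.1).2 - (x p.2).2‖ ^ ((1 : ℝ) / (1 + (κ : ℝ))) ≤ g p := by
        have : g p = ‖(x p.1).1 - (x p.2).1‖ +
            ‖(x p.1).2 - (x p.2).2‖ ^ ((1 : ℝ) / (1 + (κ : ℝ))) := by
          simp only [hgdef]; unfold gd; rw [if_neg hc]
        rw [this]
        exact le_add_of_nonneg_left (norm_nonneg _)
      have hid : ‖(x p.1).2 - (x p.2).2‖ =
          (‖(x p.1).2 - (x p.2).2‖ ^ ((1 : ℝ) / (1 + (κ : ℝ)))) ^ (1+κ) := by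
        rw [← Real.rpow_natCast (‖(x p.1).2 - (x p.2).2‖ ^ ((1 : ℝ) / (1 + (κ : ℝ)))) (1+κ),
          ← Real.rpow_mul hd2]
        push_cast
        rw [one_div, inv_mul_cancel₀ (by positivity), Real.rpow_one]
      calc ‖(x p.1).2 - (x p.2).2‖
          = (‖(x p.1).2 - (x p.2).2‖ ^ ((1 : ℝ) / (1 + (κ : ℝ)))) ^ (1+κ) := hid
        _ ≤ (g p)^(1+κ) := pow_le_pow_left₀ (Real.rpow_nonneg hd2 _) hS _
        _ ≤ (2*M)^κ * g p + (g p)^(1+κ) := le_add_of_nonneg_left hrhs0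
  have hub : Tendsto (fun p : ℕ × ℕ => (2*M)^κ * g p + (g p)^(1+κ)) atTop (nhds 0) := by
    have h1 : Tendsto (fun p : ℕ × ℕ => (2*M)^κ * g p) atTop (nhds ((2*M)^κ * 0)) :=
      hcauchy.const_mul _
    have h2 : Tendsto (fun p : ℕ × ℕ => (g p)^(1+κ)) atTop (nhds (0^(1+κ))) :=
      hcauchy.pow _
    simpa using h1.add h2
  rw [cauchySeq_iff_tendsto_dist_atTop_0]
  exact squeeze_zero (fun p => dist_nonneg)
    (fun p => by rw [dist_eq_norm]; exact key p) hub
end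

section
/- For -Q(p-1) < a < Q and 1 < p < ∞, the weight w_a(x) = d(0,x)^{-a} belongs to the Muckenhoupt class A_p on the homogeneous space (ℝ^{n₁+n₂}, d, Lebesgue), i.e., sup_B (|B|^{-1}∫_B w_a)(|B|^{-1}∫_B w_a^{1-p'})^{p-1} < ∞ where p' is the Hölder conjugate of p. -/
open MeasureTheory Filter Topology

/-- The ball of the Grushin quasi-metric. -/
def gball (n₁ n₂ κ : ℕ) (x : GS n₁ n₂) (r : ℝ) : Set (GS n₁ n₂) :=
  {y | gd n₁ n₂ κ x y < r}

namespace Grush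
variable (κ : ℕ)
noncomputable def th : ℝ := 1 / (1 + (κ : ℝ))
lemma th_pos : 0 < th κ := by
  have : (0:ℝ) < 1 + κ := by positivity
  exact div_pos one_pos this
lemma th_le_one : th κ ≤ 1 := by
  rw [th, div_le_one (by positivity)]; simp
lemma th_mul : th κ * (1 + (κ:ℝ)) = 1 := by rw [th]; field_simp
variable (n₁ n₂ : ℕ)
noncomputable def rho (x : GS n₁ n₂) : ℝ := ‖x.1‖ + ‖x.2‖ ^ th κ
lemma rho_nonneg (x : GS n₁ n₂) : 0 ≤ rho κ n₁ n₂ x :=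
  add_nonneg (norm_nonneg _) (Real.rpow_nonneg (norm_nonneg _) _)
lemma gd_nonneg (x y : GS n₁ n₂) : 0 ≤ gd n₁ n₂ κ x y := by
  unfold gd; refine add_nonneg (norm_nonneg _) ?_
  split <;> positivity

-- new part
lemma gd_eq (x y : GS n₁ n₂) : gd n₁ n₂ κ x y =
    ‖x.1 - y.1‖ + (if ‖x.2 - y.2‖ ^ th κ ≤ ‖x.1‖ + ‖y.1‖ then
      ‖x.2 - y.2‖ / (‖x.1‖ + ‖y.1‖) ^ κ else ‖x.2 - y.2‖ ^ th κ) := rfl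

lemma gd_comm (x y : GS n₁ n₂) : gd n₁ n₂ κ x y = gd n₁ n₂ κ y x := by
  rw [gd_eq, gd_eq, norm_sub_rev, norm_sub_rev x.2, add_comm ‖x.1‖]

/-- If `D^θ ≤ S` then `D / S^κ ≤ D^θ`. -/
lemma div_le_rpow_th {D S : ℝ} (hD : 0 ≤ D) (h : D ^ th κ ≤ S) :
    D / S ^ κ ≤ D ^ th κ := by
  rcases eq_or_lt_of_le hD with h0 | hDpos
  · simp [← h0, Real.zero_rpow (th_pos κ).ne']
  · have hth : (0:ℝ) < D ^ th κ := Real.rpow_pos_of_pos hDpos _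
    have hS : (0:ℝ) < S := lt_of_lt_of_le hth h
    have hpow : (D ^ th κ) ^ (κ:ℕ) ≤ S ^ (κ:ℕ) := pow_le_pow_left₀ hth.le h κ
    have hkey : D ≤ D ^ th κ * S ^ (κ:ℕ) := by
      calc D = D ^ (th κ * (1 + (κ:ℝ))) := by rw [th_mul, Real.rpow_one]
        _ = (D ^ th κ) * (D ^ th κ) ^ (κ:ℕ) := by
            rw [Real.rpow_mul hD, Real.rpow_add hth, Real.rpow_one, Real.rpow_natCast]
        _ ≤ D ^ th κ * S ^ (κ:ℕ) := mul_le_mul_of_nonneg_left hpow hth.le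
    rw [div_le_iff₀ (by positivity)]
    exact hkey

lemma rpow_th_add_le {x y : ℝ} (hx : 0 ≤ x) (hy : 0 ≤ y) :
    (x + y) ^ th κ ≤ x ^ th κ + y ^ th κ := by
  have h := NNReal.rpow_add_le_add_rpow x.toNNReal y.toNNReal (th_pos κ).le (th_le_one κ)
  have hc : ((x.toNNReal + y.toNNReal : NNReal) : ℝ) = x + y := by
    simp [Real.coe_toNNReal _ hx, Real.coe_toNNReal _ hy]
  calc (x + y) ^ th κ = ((x.toNNReal + y.toNNReal : NNReal) : ℝ) ^ th κ := by rw [hc]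
    _ = (((x.toNNReal + y.toNNReal) ^ th κ : NNReal) : ℝ) := by rw [← NNReal.coe_rpow]
    _ ≤ (((x.toNNReal ^ th κ + y.toNNReal ^ th κ : NNReal)) : ℝ) := by exact_mod_cast h
    _ = x ^ th κ + y ^ th κ := by
        push_cast [NNReal.coe_rpow, Real.coe_toNNReal _ hx, Real.coe_toNNReal _ hy]
        ring

lemma gd_zero_le (x : GS n₁ n₂) : gd n₁ n₂ κ 0 x ≤ 2 * rho κ n₁ n₂ x := by
  have h0 : gd n₁ n₂ κ 0 x =
      ‖x.1‖ + (if ‖x.2‖ ^ th κ ≤ ‖x.1‖ then ‖x.2‖ / ‖x.1‖ ^ κ else ‖x.2‖ ^ th κ) := by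
    rw [gd_eq]
    simp [norm_sub_rev]
  rw [h0, rho]
  split
  · rename_i h
    have h2 : ‖x.2‖ / ‖x.1‖ ^ κ ≤ ‖x.2‖ ^ th κ := by
      simpa using div_le_rpow_th κ (norm_nonneg x.2) h
    have := Real.rpow_nonneg (norm_nonneg x.2) (th κ)
    nlinarith [norm_nonneg x.1]
  · nlinarith [norm_nonneg x.1, Real.rpow_nonneg (norm_nonneg x.2) (th κ)]

lemma le_gd_zero (x : GS n₁ n₂) : rho κ n₁ n₂ x ≤ 2 * gd n₁ n₂ κ 0 x := by
  have h0 : gd n₁ n₂ κ 0 x =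
      ‖x.1‖ + (if ‖x.2‖ ^ th κ ≤ ‖x.1‖ then ‖x.2‖ / ‖x.1‖ ^ κ else ‖x.2‖ ^ th κ) := by
    rw [gd_eq]; simp [norm_sub_rev]
  rw [h0, rho]
  split
  · rename_i h
    have : 0 ≤ ‖x.2‖ / ‖x.1‖ ^ κ := by positivity
    nlinarith [norm_nonneg x.1]
  · nlinarith [norm_nonneg x.1, Real.rpow_nonneg (norm_nonneg x.2) (th κ)]

/-- quasi-triangle inequality for ρ against `gd`. -/
lemma rho_quasi (x y : GS n₁ n₂) :
    rho κ n₁ n₂ y ≤ 4 * rho κ n₁ n₂ x + 2 * gd n₁ n₂ κ x y := by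
  have h1 : ‖y.1‖ ≤ ‖x.1‖ + ‖x.1 - y.1‖ := by
    have := norm_sub_norm_le y.1 x.1
    rw [norm_sub_rev] at this; linarith
  have hd1 : ‖x.1 - y.1‖ ≤ gd n₁ n₂ κ x y := by
    rw [gd_eq]
    have : (0:ℝ) ≤ (if ‖x.2 - y.2‖ ^ th κ ≤ ‖x.1‖ + ‖y.1‖ then
        ‖x.2 - y.2‖ / (‖x.1‖ + ‖y.1‖) ^ κ else ‖x.2 - y.2‖ ^ th κ) := by
      split <;> positivity
    linarith
  have h2 : ‖y.2‖ ^ th κ ≤ ‖x.2‖ ^ th κ + ‖x.2 - y.2‖ ^ th κ := by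
    have hy2 : ‖y.2‖ ≤ ‖x.2‖ + ‖x.2 - y.2‖ := by
      have := norm_sub_norm_le y.2 x.2
      rw [norm_sub_rev] at this; linarith
    calc ‖y.2‖ ^ th κ ≤ (‖x.2‖ + ‖x.2 - y.2‖) ^ th κ :=
          Real.rpow_le_rpow (norm_nonneg _) hy2 (th_pos κ).le
      _ ≤ ‖x.2‖ ^ th κ + ‖x.2 - y.2‖ ^ th κ :=
          rpow_th_add_le κ (norm_nonneg _) (norm_nonneg _)
  have h3 : ‖x.2 - y.2‖ ^ th κ ≤ 2 * rho κ n₁ n₂ x + gd n₁ n₂ κ x y := by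
    rw [gd_eq]
    split
    · rename_i h
      have hrest : (0:ℝ) ≤ ‖x.2 - y.2‖ / (‖x.1‖ + ‖y.1‖) ^ κ := by positivity
      have : ‖x.2 - y.2‖ ^ th κ ≤ ‖x.1‖ + ‖y.1‖ := h
      have hx2 : (0:ℝ) ≤ ‖x.2‖ ^ th κ := Real.rpow_nonneg (norm_nonneg _) _
      rw [rho]
      nlinarith [norm_nonneg (x.1 - y.1), norm_nonneg x.1]
    · have := rho_nonneg κ n₁ n₂ x
      nlinarith [norm_nonneg (x.1 - y.1)]
  have hx2 : ‖x.2‖ ^ th κ ≤ rho κ n₁ n₂ x := by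
    rw [rho]; nlinarith [norm_nonneg x.1]
  have hx1 : ‖x.1‖ ≤ rho κ n₁ n₂ x := by
    rw [rho]; nlinarith [Real.rpow_nonneg (norm_nonneg x.2) (th κ)]
  rw [rho]
  calc ‖y.1‖ + ‖y.2‖ ^ th κ
      ≤ (‖x.1‖ + ‖x.1 - y.1‖) + (‖x.2‖ ^ th κ + ‖x.2 - y.2‖ ^ th κ) := by
        exact add_le_add h1 h2
    _ ≤ (rho κ n₁ n₂ x + gd n₁ n₂ κ x y) + (rho κ n₁ n₂ x + (2 * rho κ n₁ n₂ x + gd n₁ n₂ κ x y)) := by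
        gcongr
    _ = 4 * rho κ n₁ n₂ x + 2 * gd n₁ n₂ κ x y := by ring

lemma meas_gd (x₀ : GS n₁ n₂) : Measurable (gd n₁ n₂ κ x₀) := by
  unfold gd
  have h1 : Measurable fun y : GS n₁ n₂ => ‖x₀.1 - y.1‖ :=
    (measurable_const.sub measurable_fst).norm
  have h2 : Measurable fun y : GS n₁ n₂ => ‖x₀.2 - y.2‖ :=
    (measurable_const.sub measurable_snd).norm
  have h3 : Measurable fun y : GS n₁ n₂ => ‖x₀.1‖ + ‖y.1‖ :=
    measurable_const.add measurable_fst.norm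
  refine h1.add (Measurable.ite ?_ (h2.div (h3.pow_const κ)) ?_)
  · exact measurableSet_le ((Real.continuous_rpow_const (th_pos κ).le).measurable.comp h2) h3
  · exact (Real.continuous_rpow_const (th_pos κ).le).measurable.comp h2

lemma meas_rho : Measurable (rho κ n₁ n₂) := by
  unfold rho
  exact measurable_fst.norm.add ((Real.continuous_rpow_const (th_pos κ).le).measurable.comp measurable_snd.norm)

lemma meas_gball (x₀ : GS n₁ n₂) (r : ℝ) : MeasurableSet (gball n₁ n₂ κ x₀ r) :=
  measurableSet_lt (meas_gd κ n₁ n₂ x₀) measurable_const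

lemma meas_sublevel (s : ℝ) : MeasurableSet {x : GS n₁ n₂ | rho κ n₁ n₂ x ≤ s} :=
  measurableSet_le (meas_rho κ n₁ n₂) measurable_const

lemma box_subset_gball (x₀ : GS n₁ n₂) {r : ℝ} (hr : 0 < r) :
    (Metric.ball x₀.1 (r/2)) ×ˢ (Metric.ball x₀.2 ((r/2) ^ (1+κ))) ⊆
      gball n₁ n₂ κ x₀ r := by
  rintro y ⟨h1, h2⟩
  rw [Metric.mem_ball, dist_eq_norm, norm_sub_rev] at h1 h2
  have hth : ‖x₀.2 - y.2‖ ^ th κ < r / 2 := by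
    have hc : ((r/2) ^ (1+κ) : ℝ) ^ th κ = r / 2 := by
      rw [← Real.rpow_natCast (r/2) (1+κ), ← Real.rpow_mul (by positivity)]
      push_cast
      rw [mul_comm, th_mul, Real.rpow_one]
    calc ‖x₀.2 - y.2‖ ^ th κ < ((r/2) ^ (1+κ) : ℝ) ^ th κ :=
          Real.rpow_lt_rpow (norm_nonneg _) h2 (th_pos κ)
      _ = r / 2 := hc
  have hterm : (if ‖x₀.2 - y.2‖ ^ th κ ≤ ‖x₀.1‖ + ‖y.1‖ then
      ‖x₀.2 - y.2‖ / (‖x₀.1‖ + ‖y.1‖) ^ κ else ‖x₀.2 - y.2‖ ^ th κ) < r / 2 := by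
    split
    · rename_i h
      exact lt_of_le_of_lt (div_le_rpow_th κ (norm_nonneg _) h) hth
    · exact hth
  show gd n₁ n₂ κ x₀ y < r
  rw [gd_eq]
  linarith

lemma sublevel_subset_box {s : ℝ} (hs : 0 ≤ s) :
    {x : GS n₁ n₂ | rho κ n₁ n₂ x ≤ s} ⊆
      Metric.closedBall 0 s ×ˢ Metric.closedBall 0 (s ^ (1+κ)) := by
  intro x hx
  rw [Set.mem_setOf_eq, rho] at hx
  have hx2' : (0:ℝ) ≤ ‖x.2‖ ^ th κ := Real.rpow_nonneg (norm_nonneg _) _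
  have hx1 : ‖x.1‖ ≤ s := by nlinarith [norm_nonneg x.1]
  have hx2 : ‖x.2‖ ^ th κ ≤ s := by nlinarith [norm_nonneg x.1]
  constructor
  · simpa [Metric.mem_closedBall, dist_eq_norm] using hx1
  · have : (‖x.2‖ ^ th κ) ^ (1+κ) ≤ s ^ (1+κ) := pow_le_pow_left₀ hx2' hx2 _
    have he : (‖x.2‖ ^ th κ) ^ (1+κ) = ‖x.2‖ := by
      rw [← Real.rpow_natCast (‖x.2‖ ^ th κ) (1+κ), ← Real.rpow_mul (norm_nonneg _)]
      push_cast
      rw [th_mul, Real.rpow_one]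
    rw [he] at this
    simpa [Metric.mem_closedBall, dist_eq_norm] using this

/-- volume of unit ball constant. -/
noncomputable def cV (n : ℕ) : ℝ :=
  (volume (Metric.ball (0 : EuclideanSpace ℝ (Fin n)) 1)).toReal

lemma cV_pos (n : ℕ) : 0 < cV n :=
  ENNReal.toReal_pos (Metric.measure_ball_pos _ _ one_pos).ne' measure_ball_lt_top.ne

/-- the natural homogeneous dimension. -/
def Qn : ℕ := n₁ + (1+κ) * n₂

lemma vol_sublevel_upper {s : ℝ} (hs : 0 ≤ s) :
    volume {x : GS n₁ n₂ | rho κ n₁ n₂ x ≤ s} ≤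
      ENNReal.ofReal ((cV n₁ * cV n₂) * s ^ Qn κ n₁ n₂) := by
  refine le_trans (measure_mono (sublevel_subset_box κ n₁ n₂ hs)) ?_
  rw [Measure.volume_eq_prod, Measure.prod_prod,
    Measure.addHaar_closedBall _ _ hs, Measure.addHaar_closedBall _ _ (by positivity),
    finrank_euclideanSpace_fin, finrank_euclideanSpace_fin]
  have hv1 : volume (Metric.ball (0 : EuclideanSpace ℝ (Fin n₁)) 1) = ENNReal.ofReal (cV n₁) :=
    (ENNReal.ofReal_toReal measure_ball_lt_top.ne).symm
  have hv2 : volume (Metric.ball (0 : EuclideanSpace ℝ (Fin n₂)) 1) = ENNReal.ofReal (cV n₂) :=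
    (ENNReal.ofReal_toReal measure_ball_lt_top.ne).symm
  have h1 : (0:ℝ) ≤ s ^ n₁ := pow_nonneg hs _
  have h2 : (0:ℝ) ≤ (s ^ (1+κ)) ^ n₂ := pow_nonneg (pow_nonneg hs _) _
  rw [hv1, hv2, ← ENNReal.ofReal_mul h1, ← ENNReal.ofReal_mul h2,
    ← ENNReal.ofReal_mul (mul_nonneg h1 (cV_pos n₁).le)]
  apply ENNReal.ofReal_le_ofReal
  apply le_of_eq
  have hQ : s ^ n₁ * ((s ^ (1+κ)) ^ n₂) = s ^ Qn κ n₁ n₂ := by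
    rw [← pow_mul, ← pow_add]; rfl
  calc s ^ n₁ * cV n₁ * ((s ^ (1+κ)) ^ n₂ * cV n₂)
      = cV n₁ * cV n₂ * (s ^ n₁ * (s ^ (1+κ)) ^ n₂) := by ring
    _ = cV n₁ * cV n₂ * s ^ Qn κ n₁ n₂ := by rw [hQ]

lemma vol_gball_lower (x₀ : GS n₁ n₂) {r : ℝ} (hr : 0 < r) :
    ENNReal.ofReal (((2:ℝ)⁻¹ ^ Qn κ n₁ n₂ * (cV n₁ * cV n₂)) * r ^ Qn κ n₁ n₂) ≤
      volume (gball n₁ n₂ κ x₀ r) := by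
  refine le_trans ?_ (measure_mono (box_subset_gball κ n₁ n₂ x₀ hr))
  rw [Measure.volume_eq_prod, Measure.prod_prod,
    Measure.addHaar_ball_of_pos _ _ (by positivity : (0:ℝ) < r/2),
    Measure.addHaar_ball_of_pos _ _ (by positivity : (0:ℝ) < (r/2) ^ (1+κ)),
    finrank_euclideanSpace_fin, finrank_euclideanSpace_fin]
  have hv1 : volume (Metric.ball (0 : EuclideanSpace ℝ (Fin n₁)) 1) = ENNReal.ofReal (cV n₁) :=
    (ENNReal.ofReal_toReal measure_ball_lt_top.ne).symm
  have hv2 : volume (Metric.ball (0 : EuclideanSpace ℝ (Fin n₂)) 1) = ENNReal.ofReal (cV n₂) :=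
    (ENNReal.ofReal_toReal measure_ball_lt_top.ne).symm
  have h1 : (0:ℝ) ≤ (r/2) ^ n₁ := by positivity
  have h2 : (0:ℝ) ≤ ((r/2) ^ (1+κ)) ^ n₂ := by positivity
  rw [hv1, hv2, ← ENNReal.ofReal_mul h1, ← ENNReal.ofReal_mul h2,
    ← ENNReal.ofReal_mul (mul_nonneg h1 (cV_pos n₁).le)]
  apply ENNReal.ofReal_le_ofReal
  apply le_of_eq
  have hQ : (r/2) ^ n₁ * (((r/2) ^ (1+κ)) ^ n₂) = (r/2) ^ Qn κ n₁ n₂ := by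
    rw [← pow_mul, ← pow_add]; rfl
  have hsplit : ((r:ℝ)/2) ^ Qn κ n₁ n₂ = (2:ℝ)⁻¹ ^ Qn κ n₁ n₂ * r ^ Qn κ n₁ n₂ := by
    rw [div_eq_inv_mul, mul_pow]
  calc (2:ℝ)⁻¹ ^ Qn κ n₁ n₂ * (cV n₁ * cV n₂) * r ^ Qn κ n₁ n₂
      = cV n₁ * cV n₂ * ((2:ℝ)⁻¹ ^ Qn κ n₁ n₂ * r ^ Qn κ n₁ n₂) := by ring
    _ = cV n₁ * cV n₂ * ((r/2) ^ n₁ * ((r/2) ^ (1+κ)) ^ n₂) := by rw [← hsplit, hQ]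
    _ = (r/2) ^ n₁ * cV n₁ * (((r/2) ^ (1+κ)) ^ n₂ * cV n₂) := by ring

lemma gball_subset_sublevel (x₀ : GS n₁ n₂) (r : ℝ) :
    gball n₁ n₂ κ x₀ r ⊆ {x : GS n₁ n₂ | rho κ n₁ n₂ x ≤ 4 * rho κ n₁ n₂ x₀ + 2 * r} := by
  intro x hx
  have h := rho_quasi κ n₁ n₂ x₀ x
  have : gd n₁ n₂ κ x₀ x < r := hx
  simp only [Set.mem_setOf_eq]
  linarith

lemma vol_gball_lt_top (x₀ : GS n₁ n₂) (r : ℝ) : volume (gball n₁ n₂ κ x₀ r) < ⊤ := by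
  rcases le_or_gt r 0 with hr | hr
  · have : gball n₁ n₂ κ x₀ r = ∅ := by
      ext x
      simp only [gball, Set.mem_setOf_eq, Set.mem_empty_iff_false, iff_false, not_lt]
      exact le_trans hr (gd_nonneg κ n₁ n₂ x₀ x)
    simp [this]
  · have hs : (0:ℝ) ≤ 4 * rho κ n₁ n₂ x₀ + 2 * r := by
      have := rho_nonneg κ n₁ n₂ x₀; linarith
    calc volume (gball n₁ n₂ κ x₀ r)
        ≤ volume {x : GS n₁ n₂ | rho κ n₁ n₂ x ≤ 4 * rho κ n₁ n₂ x₀ + 2 * r} :=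
          measure_mono (gball_subset_sublevel κ n₁ n₂ x₀ r)
      _ ≤ ENNReal.ofReal _ := vol_sublevel_upper κ n₁ n₂ hs
      _ < ⊤ := ENNReal.ofReal_lt_top

lemma rho_eq_zero {x : GS n₁ n₂} (h : rho κ n₁ n₂ x ≤ 0) : x = 0 := by
  have h1 : (0:ℝ) ≤ ‖x.1‖ := norm_nonneg _
  have h2 : (0:ℝ) ≤ ‖x.2‖ ^ th κ := Real.rpow_nonneg (norm_nonneg _) _
  rw [rho] at h
  have hx1 : ‖x.1‖ = 0 := le_antisymm (by linarith) h1
  have hx2 : ‖x.2‖ ^ th κ = 0 := le_antisymm (by linarith) h2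
  have hx2' : ‖x.2‖ = 0 := by
    by_contra hne
    have : (0:ℝ) < ‖x.2‖ := lt_of_le_of_ne (norm_nonneg _) (Ne.symm hne)
    exact absurd hx2 (Real.rpow_pos_of_pos this _).ne'
  have : x.1 = 0 := norm_eq_zero.mp hx1
  have : x.2 = 0 := norm_eq_zero.mp hx2'
  exact Prod.ext (norm_eq_zero.mp hx1) (norm_eq_zero.mp hx2')

lemma singleton_zero_null (hn₁ : 1 ≤ n₁) : volume ({(0 : GS n₁ n₂)} : Set (GS n₁ n₂)) = 0 := by
  have h1 : volume ({(0 : EuclideanSpace ℝ (Fin n₁))} : Set (EuclideanSpace ℝ (Fin n₁))) = 0 := by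
    have hsub : ({(0 : EuclideanSpace ℝ (Fin n₁))} : Set (EuclideanSpace ℝ (Fin n₁))) ⊆
        Metric.closedBall 0 0 := by
      intro y hy; simp_all [Metric.mem_closedBall]
    refine le_antisymm (le_trans (measure_mono hsub) ?_) (zero_le)
    rw [Measure.addHaar_closedBall _ _ le_rfl, finrank_euclideanSpace_fin]
    have : ((0:ℝ) ^ n₁) = 0 := zero_pow (by omega)
    simp [this]
  have : ({(0 : GS n₁ n₂)} : Set (GS n₁ n₂)) =
      ({0} : Set (EuclideanSpace ℝ (Fin n₁))) ×ˢ ({0} : Set (EuclideanSpace ℝ (Fin n₂))) := by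
    rw [Set.singleton_prod_singleton]; rfl
  rw [this, Measure.volume_eq_prod, Measure.prod_prod, h1, zero_mul]

lemma geom_calc {R c : ℝ} (hR : 0 < R) (Q cU : ℝ) (k : ℕ) :
    (R * (2:ℝ)⁻¹ ^ (k+2)) ^ c * (cU * (R * (2:ℝ)⁻¹ ^ k) ^ Q) =
      (cU * ((2:ℝ)⁻¹ ^ (2:ℕ) : ℝ) ^ c * R ^ (Q + c)) * ((2:ℝ)⁻¹ ^ (Q + c)) ^ k := by
  set q : ℝ := (2:ℝ)⁻¹ with hqdef
  have hq : (0:ℝ) < q := by norm_num [hqdef]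
  have e1 : (R * q ^ (k+2)) ^ c = R ^ c * q ^ (((k:ℝ)+2)*c) := by
    rw [Real.mul_rpow hR.le (pow_nonneg hq.le _), ← Real.rpow_natCast q (k+2),
      ← Real.rpow_mul hq.le]
    push_cast; ring_nf
  have e2 : (R * q ^ k) ^ Q = R ^ Q * q ^ ((k:ℝ)*Q) := by
    rw [Real.mul_rpow hR.le (pow_nonneg hq.le _), ← Real.rpow_natCast q k,
      ← Real.rpow_mul hq.le]
  have e3 : ((q ^ (Q+c)) ^ k : ℝ) = q ^ ((Q+c)*(k:ℝ)) := by
    rw [← Real.rpow_natCast (q ^ (Q+c)) k, ← Real.rpow_mul hq.le]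
  have e4 : ((q ^ (2:ℕ) : ℝ)) ^ c = q ^ ((2:ℝ)*c) := by
    rw [← Real.rpow_natCast q 2, ← Real.rpow_mul hq.le]
    norm_num
  rw [e1, e2, e3, e4, Real.rpow_add hR]
  have e5 : q ^ (((k:ℝ)+2)*c) * q ^ ((k:ℝ)*Q) = q ^ ((2:ℝ)*c) * q ^ ((Q+c)*(k:ℝ)) := by
    rw [← Real.rpow_add hq, ← Real.rpow_add hq]
    congr 1; ring
  calc R ^ c * q ^ (((k:ℝ)+2)*c) * (cU * (R ^ Q * q ^ ((k:ℝ)*Q)))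
      = (R ^ c * R ^ Q * cU) * (q ^ (((k:ℝ)+2)*c) * q ^ ((k:ℝ)*Q)) := by ring
    _ = (R ^ c * R ^ Q * cU) * (q ^ ((2:ℝ)*c) * q ^ ((Q+c)*(k:ℝ))) := by rw [e5]
    _ = cU * q ^ ((2:ℝ)*c) * (R ^ Q * R ^ c) * q ^ ((Q+c)*(k:ℝ)) := by ring

/-- The key integral estimate: `∫_{ρ ≤ R} d(0,x)^c dx ≲ R^{Q+c}` for `c > -Q`. -/
lemma lintegral_bound (hn₁ : 1 ≤ n₁) {c : ℝ} (hc : -((Qn κ n₁ n₂ : ℕ) : ℝ) < c) :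
    ∃ C : ℝ, 0 < C ∧ ∀ R : ℝ, 0 < R →
      ∫⁻ x in {x : GS n₁ n₂ | rho κ n₁ n₂ x ≤ R}, ENNReal.ofReal (gd n₁ n₂ κ 0 x ^ c) ≤
        ENNReal.ofReal (C * R ^ (((Qn κ n₁ n₂ : ℕ) : ℝ) + c)) := by
  set Q : ℝ := ((Qn κ n₁ n₂ : ℕ) : ℝ) with hQdef
  have hQc : 0 < Q + c := by linarith
  set cU : ℝ := cV n₁ * cV n₂ with hcUdef
  have hcU : 0 < cU := mul_pos (cV_pos n₁) (cV_pos n₂)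
  rcases le_or_gt 0 c with hc0 | hc0
  · -- easy case `0 ≤ c`
    refine ⟨(2:ℝ) ^ c * cU, by positivity, fun R hR => ?_⟩
    have hb : ∀ x ∈ {x : GS n₁ n₂ | rho κ n₁ n₂ x ≤ R},
        ENNReal.ofReal (gd n₁ n₂ κ 0 x ^ c) ≤ ENNReal.ofReal ((2*R) ^ c) := by
      intro x hx
      apply ENNReal.ofReal_le_ofReal
      apply Real.rpow_le_rpow (gd_nonneg κ n₁ n₂ 0 x) ?_ hc0
      calc gd n₁ n₂ κ 0 x ≤ 2 * rho κ n₁ n₂ x := gd_zero_le κ n₁ n₂ x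
        _ ≤ 2 * R := by have := hx; simp only [Set.mem_setOf_eq] at this; linarith
    calc ∫⁻ x in {x : GS n₁ n₂ | rho κ n₁ n₂ x ≤ R}, ENNReal.ofReal (gd n₁ n₂ κ 0 x ^ c)
        ≤ ∫⁻ _ in {x : GS n₁ n₂ | rho κ n₁ n₂ x ≤ R}, ENNReal.ofReal ((2*R) ^ c) :=
          setLIntegral_mono' (meas_sublevel κ n₁ n₂ R) hb
      _ = ENNReal.ofReal ((2*R) ^ c) * volume {x : GS n₁ n₂ | rho κ n₁ n₂ x ≤ R} :=
          setLIntegral_const _ _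
      _ ≤ ENNReal.ofReal ((2*R) ^ c) * ENNReal.ofReal (cU * R ^ Qn κ n₁ n₂) := by
          exact mul_le_mul_right (vol_sublevel_upper κ n₁ n₂ hR.le) _
      _ = ENNReal.ofReal ((2*R) ^ c * (cU * R ^ Qn κ n₁ n₂)) := by
          rw [← ENNReal.ofReal_mul (Real.rpow_nonneg (by linarith) _)]
      _ = ENNReal.ofReal ((2:ℝ) ^ c * cU * R ^ (Q + c)) := by
          congr 1
          rw [Real.mul_rpow (by norm_num) hR.le, Real.rpow_add hR,
            ← Real.rpow_natCast R (Qn κ n₁ n₂)]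
          ring
  · -- hard case `c < 0`: dyadic annuli
    set q : ℝ := (2:ℝ)⁻¹ with hqdef
    have hq : (0:ℝ) < q := by norm_num [hqdef]
    have hq1 : q < 1 := by norm_num [hqdef]
    set t : ℝ := q ^ (Q + c) with htdef
    have ht0 : 0 < t := Real.rpow_pos_of_pos hq _
    have ht1 : t < 1 := Real.rpow_lt_one hq.le hq1 hQc
    refine ⟨cU * ((q ^ (2:ℕ) : ℝ)) ^ c * (1 - t)⁻¹,
      mul_pos (mul_pos hcU (Real.rpow_pos_of_pos (by positivity) _))
        (inv_pos.mpr (by linarith)), fun R hR => ?_⟩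
    set g : GS n₁ n₂ → ENNReal := fun x => ENNReal.ofReal (gd n₁ n₂ κ 0 x ^ c) with hgdef
    set A : ℕ → Set (GS n₁ n₂) := fun k =>
      {x | rho κ n₁ n₂ x ≤ R * q ^ k} ∩ {x | R * q ^ (k+1) < rho κ n₁ n₂ x} with hAdef
    have hAmeas : ∀ k, MeasurableSet (A k) := by
      intro k
      apply (meas_sublevel κ n₁ n₂ _).inter
      have he : {x : GS n₁ n₂ | R * q ^ (k+1) < rho κ n₁ n₂ x} =
          {x : GS n₁ n₂ | rho κ n₁ n₂ x ≤ R * q ^ (k+1)}ᶜ := by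
        ext x; simp [not_le]
      rw [he]
      exact (meas_sublevel κ n₁ n₂ _).compl
    have hcover : {x : GS n₁ n₂ | rho κ n₁ n₂ x ≤ R} ⊆ {(0 : GS n₁ n₂)} ∪ ⋃ k, A k := by
      intro x hx
      simp only [Set.mem_setOf_eq] at hx
      rcases le_or_gt (rho κ n₁ n₂ x) 0 with h0 | h0
      · exact Or.inl (rho_eq_zero κ n₁ n₂ h0)
      · refine Or.inr (Set.mem_iUnion.mpr ?_)
        have hex : ∃ n : ℕ, q ^ n < rho κ n₁ n₂ x / R :=
          exists_pow_lt_of_lt_one (div_pos h0 hR) hq1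
        have hex' : ∃ n : ℕ, R * q ^ n < rho κ n₁ n₂ x := by
          obtain ⟨n, hn⟩ := hex
          exact ⟨n, by rwa [lt_div_iff₀ hR, mul_comm] at hn⟩
        classical
        let m := Nat.find hex'
        have hm : R * q ^ m < rho κ n₁ n₂ x := Nat.find_spec hex'
        have hm0 : m ≠ 0 := by
          intro h
          have := hm
          rw [h, pow_zero, mul_one] at this
          linarith
        obtain ⟨k, hk⟩ : ∃ k, m = k + 1 := ⟨m - 1, (Nat.succ_pred_eq_of_pos (Nat.pos_of_ne_zero hm0)).symm⟩
        refine ⟨k, ?_, ?_⟩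
        · have := Nat.find_min hex' (m := k) (by omega)
          simpa using not_lt.mp this
        · rw [← hk]; exact hm
    have hzero : ∫⁻ x in ({(0 : GS n₁ n₂)} : Set (GS n₁ n₂)), g x = 0 := by
      rw [Measure.restrict_eq_zero.mpr (singleton_zero_null n₁ n₂ hn₁), lintegral_zero_measure]
    have hannulus : ∀ k : ℕ, ∫⁻ x in A k, g x ≤
        ENNReal.ofReal ((cU * ((q ^ (2:ℕ) : ℝ)) ^ c * R ^ (Q + c)) * t ^ k) := by
      intro k
      have hlow : ∀ x ∈ A k, ENNReal.ofReal (gd n₁ n₂ κ 0 x ^ c) ≤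
          ENNReal.ofReal ((R * q ^ (k+2)) ^ c) := by
        intro x hx
        obtain ⟨hx1, hx2⟩ := hx
        simp only [Set.mem_setOf_eq] at hx1 hx2
        apply ENNReal.ofReal_le_ofReal
        have hgd : R * q ^ (k+2) ≤ gd n₁ n₂ κ 0 x := by
          have h1 : rho κ n₁ n₂ x ≤ 2 * gd n₁ n₂ κ 0 x := le_gd_zero κ n₁ n₂ x
          have h2 : q ^ (k+2) = q ^ (k+1) * q := pow_succ q (k+1)
          have hqhalf : R * (q ^ (k+1) * q) * 2 = R * q ^ (k+1) := by
            rw [hqdef]; ring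
          nlinarith [pow_pos hq (k+1), pow_pos hq (k+2)]
        exact Real.rpow_le_rpow_of_nonpos (by positivity) hgd hc0.le
      calc ∫⁻ x in A k, g x
          ≤ ∫⁻ _ in A k, ENNReal.ofReal ((R * q ^ (k+2)) ^ c) :=
            setLIntegral_mono' (hAmeas k) hlow
        _ = ENNReal.ofReal ((R * q ^ (k+2)) ^ c) * volume (A k) := setLIntegral_const _ _
        _ ≤ ENNReal.ofReal ((R * q ^ (k+2)) ^ c) *
              ENNReal.ofReal (cU * (R * q ^ k) ^ Qn κ n₁ n₂) := by
            refine mul_le_mul_right ?_ _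
            refine le_trans (measure_mono (Set.inter_subset_left)) ?_
            exact vol_sublevel_upper κ n₁ n₂ (by positivity)
        _ = ENNReal.ofReal ((R * q ^ (k+2)) ^ c * (cU * (R * q ^ k) ^ Qn κ n₁ n₂)) := by
            rw [← ENNReal.ofReal_mul (Real.rpow_nonneg (by positivity) _)]
        _ = ENNReal.ofReal ((cU * ((q ^ (2:ℕ) : ℝ)) ^ c * R ^ (Q + c)) * t ^ k) := by
            congr 1
            rw [← Real.rpow_natCast (R * q ^ k) (Qn κ n₁ n₂)]
            exact geom_calc hR Q cU k
    have hsummable : Summable (fun k : ℕ => (cU * ((q ^ (2:ℕ) : ℝ)) ^ c * R ^ (Q + c)) * t ^ k) :=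
      (summable_geometric_of_lt_one ht0.le ht1).mul_left _
    calc ∫⁻ x in {x : GS n₁ n₂ | rho κ n₁ n₂ x ≤ R}, g x
        ≤ ∫⁻ x in ({(0 : GS n₁ n₂)} : Set (GS n₁ n₂)) ∪ ⋃ k, A k, g x :=
          lintegral_mono_set hcover
      _ ≤ (∫⁻ x in ({(0 : GS n₁ n₂)} : Set (GS n₁ n₂)), g x) + ∫⁻ x in ⋃ k, A k, g x :=
          lintegral_union_le _ _ _
      _ = ∫⁻ x in ⋃ k, A k, g x := by rw [hzero, zero_add]
      _ ≤ ∑' k, ∫⁻ x in A k, g x := lintegral_iUnion_le _ _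
      _ ≤ ∑' k, ENNReal.ofReal ((cU * ((q ^ (2:ℕ) : ℝ)) ^ c * R ^ (Q + c)) * t ^ k) :=
          ENNReal.tsum_le_tsum hannulus
      _ = ENNReal.ofReal (∑' k, (cU * ((q ^ (2:ℕ) : ℝ)) ^ c * R ^ (Q + c)) * t ^ k) :=
          (ENNReal.ofReal_tsum_of_nonneg (fun k => by positivity) hsummable).symm
      _ = ENNReal.ofReal ((cU * ((q ^ (2:ℕ) : ℝ)) ^ c * R ^ (Q + c)) * (1 - t)⁻¹) := by
          rw [tsum_mul_left, tsum_geometric_of_lt_one ht0.le ht1]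
      _ = ENNReal.ofReal (cU * ((q ^ (2:ℕ) : ℝ)) ^ c * (1 - t)⁻¹ * R ^ (Q + c)) := by
          congr 1; ring

lemma integral_bound (hn₁ : 1 ≤ n₁) {c : ℝ} (hc : -((Qn κ n₁ n₂ : ℕ) : ℝ) < c) :
    ∃ C : ℝ, 0 < C ∧ ∀ R : ℝ, 0 < R →
      IntegrableOn (fun x => gd n₁ n₂ κ 0 x ^ c) {x : GS n₁ n₂ | rho κ n₁ n₂ x ≤ R} volume ∧
      ∫ x in {x : GS n₁ n₂ | rho κ n₁ n₂ x ≤ R}, gd n₁ n₂ κ 0 x ^ c ≤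
        C * R ^ (((Qn κ n₁ n₂ : ℕ) : ℝ) + c) := by
  obtain ⟨C, hC, hB⟩ := lintegral_bound κ n₁ n₂ hn₁ hc
  refine ⟨C, hC, fun R hR => ?_⟩
  have hmeas : Measurable fun x : GS n₁ n₂ => gd n₁ n₂ κ 0 x ^ c :=
    (meas_gd κ n₁ n₂ 0).pow measurable_const
  have hnn : (0 : GS n₁ n₂ → ℝ) ≤ᵐ[volume.restrict {x : GS n₁ n₂ | rho κ n₁ n₂ x ≤ R}]
      fun x => gd n₁ n₂ κ 0 x ^ c :=
    Filter.Eventually.of_forall fun x => by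
      simpa using Real.rpow_nonneg (gd_nonneg κ n₁ n₂ 0 x) c
  have hint : IntegrableOn (fun x => gd n₁ n₂ κ 0 x ^ c)
      {x : GS n₁ n₂ | rho κ n₁ n₂ x ≤ R} volume := by
    refine ⟨hmeas.aestronglyMeasurable, ?_⟩
    rw [hasFiniteIntegral_iff_ofReal hnn]
    exact lt_of_le_of_lt (hB R hR) ENNReal.ofReal_lt_top
  refine ⟨hint, ?_⟩
  rw [integral_eq_lintegral_of_nonneg_ae hnn hmeas.aestronglyMeasurable]
  exact ENNReal.toReal_le_of_le_ofReal (by positivity) (hB R hR)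

lemma vol_gball_toReal (x₀ : GS n₁ n₂) {r : ℝ} (hr : 0 < r) :
    ((2:ℝ)⁻¹ ^ Qn κ n₁ n₂ * (cV n₁ * cV n₂)) * r ^ Qn κ n₁ n₂ ≤
      (volume (gball n₁ n₂ κ x₀ r)).toReal := by
  have h := ENNReal.toReal_mono (vol_gball_lt_top κ n₁ n₂ x₀ r).ne (vol_gball_lower κ n₁ n₂ x₀ hr)
  have hv1 := cV_pos n₁; have hv2 := cV_pos n₂
  rwa [ENNReal.toReal_ofReal (by positivity)] at h

lemma vol_gball_toReal_pos (x₀ : GS n₁ n₂) {r : ℝ} (hr : 0 < r) :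
    0 < (volume (gball n₁ n₂ κ x₀ r)).toReal := by
  refine lt_of_lt_of_le ?_ (vol_gball_toReal κ n₁ n₂ x₀ hr)
  have hv1 := cV_pos n₁; have hv2 := cV_pos n₂
  positivity

/-- Average of a function bounded on the ball. -/
lemma avg_le (x₀ : GS n₁ n₂) {r : ℝ} (hr : 0 < r) {c M : ℝ} (hM : 0 ≤ M)
    (hbd : ∀ x ∈ gball n₁ n₂ κ x₀ r, gd n₁ n₂ κ 0 x ^ c ≤ M) :
    (volume (gball n₁ n₂ κ x₀ r)).toReal⁻¹ *
      ∫ x in gball n₁ n₂ κ x₀ r, gd n₁ n₂ κ 0 x ^ c ≤ M := by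
  set V := (volume (gball n₁ n₂ κ x₀ r)).toReal with hV
  have hVpos : 0 < V := vol_gball_toReal_pos κ n₁ n₂ x₀ hr
  have hInt : ∫ x in gball n₁ n₂ κ x₀ r, gd n₁ n₂ κ 0 x ^ c ≤ M * V := by
    have hn := norm_setIntegral_le_of_norm_le_const (vol_gball_lt_top κ n₁ n₂ x₀ r)
      (f := fun x => gd n₁ n₂ κ 0 x ^ c) (C := M) ?_
    · exact le_trans (le_abs_self _) (by simpa [Real.norm_eq_abs, Measure.real, hV] using hn)
    · intro x hx
      rw [Real.norm_eq_abs, abs_of_nonneg (Real.rpow_nonneg (gd_nonneg κ n₁ n₂ 0 x) c)]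
      exact hbd x hx
  calc V⁻¹ * ∫ x in gball n₁ n₂ κ x₀ r, gd n₁ n₂ κ 0 x ^ c
      ≤ V⁻¹ * (M * V) := mul_le_mul_of_nonneg_left hInt (inv_nonneg.mpr hVpos.le)
    _ = M := by field_simp

/-- Average bound for balls near the origin. -/
lemma avg_near (x₀ : GS n₁ n₂) {r : ℝ} (hr : 0 < r) (hnear : rho κ n₁ n₂ x₀ < 4*r)
    {c C : ℝ} (hC : 0 ≤ C)
    (hI : IntegrableOn (fun x => gd n₁ n₂ κ 0 x ^ c)
      {x : GS n₁ n₂ | rho κ n₁ n₂ x ≤ 18*r} volume)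
    (hB : ∫ x in {x : GS n₁ n₂ | rho κ n₁ n₂ x ≤ 18*r}, gd n₁ n₂ κ 0 x ^ c ≤
      C * (18*r) ^ (((Qn κ n₁ n₂ : ℕ) : ℝ) + c)) :
    (volume (gball n₁ n₂ κ x₀ r)).toReal⁻¹ *
      ∫ x in gball n₁ n₂ κ x₀ r, gd n₁ n₂ κ 0 x ^ c ≤
      (((2:ℝ)⁻¹ ^ Qn κ n₁ n₂ * (cV n₁ * cV n₂))⁻¹ *
        (C * 18 ^ (((Qn κ n₁ n₂ : ℕ) : ℝ) + c))) * r ^ c := by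
  set Q : ℝ := ((Qn κ n₁ n₂ : ℕ) : ℝ) with hQdef
  set cL : ℝ := (2:ℝ)⁻¹ ^ Qn κ n₁ n₂ * (cV n₁ * cV n₂) with hcL
  have hcLpos : 0 < cL := by
    have := cV_pos n₁; have := cV_pos n₂; positivity
  set V := (volume (gball n₁ n₂ κ x₀ r)).toReal with hV
  have hVpos : 0 < V := vol_gball_toReal_pos κ n₁ n₂ x₀ hr
  have hVlow : cL * r ^ Qn κ n₁ n₂ ≤ V := vol_gball_toReal κ n₁ n₂ x₀ hr
  have hsub : gball n₁ n₂ κ x₀ r ⊆ {x : GS n₁ n₂ | rho κ n₁ n₂ x ≤ 18*r} := by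
    intro x hx
    have h1 := gball_subset_sublevel κ n₁ n₂ x₀ r hx
    simp only [Set.mem_setOf_eq] at h1 ⊢
    linarith
  have h1 : ∫ x in gball n₁ n₂ κ x₀ r, gd n₁ n₂ κ 0 x ^ c ≤
      ∫ x in {x : GS n₁ n₂ | rho κ n₁ n₂ x ≤ 18*r}, gd n₁ n₂ κ 0 x ^ c := by
    refine setIntegral_mono_set hI ?_ (HasSubset.Subset.eventuallyLE hsub)
    exact Filter.Eventually.of_forall fun x => by
      simpa using Real.rpow_nonneg (gd_nonneg κ n₁ n₂ 0 x) c
  have h4 : 0 ≤ ∫ x in gball n₁ n₂ κ x₀ r, gd n₁ n₂ κ 0 x ^ c :=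
    setIntegral_nonneg (meas_gball κ n₁ n₂ x₀ r)
      (fun x _ => Real.rpow_nonneg (gd_nonneg κ n₁ n₂ 0 x) c)
  have h3 : V⁻¹ ≤ (cL * r ^ Qn κ n₁ n₂)⁻¹ := by
    apply inv_anti₀ (by positivity) hVlow
  have key : V⁻¹ * ∫ x in gball n₁ n₂ κ x₀ r, gd n₁ n₂ κ 0 x ^ c ≤
      (cL * r ^ Qn κ n₁ n₂)⁻¹ * (C * (18*r) ^ (Q + c)) :=
    mul_le_mul h3 (h1.trans hB) h4 (by positivity)
  refine key.trans (le_of_eq ?_)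
  have hrQ : (r : ℝ) ^ Qn κ n₁ n₂ = r ^ Q := (Real.rpow_natCast r (Qn κ n₁ n₂)).symm
  rw [hrQ, mul_inv, Real.mul_rpow (by norm_num) hr.le, ← Real.rpow_neg hr.le]
  calc cL⁻¹ * (r ^ (-Q)) * (C * ((18:ℝ) ^ (Q+c) * r ^ (Q+c)))
      = cL⁻¹ * (C * 18 ^ (Q+c)) * (r ^ (-Q) * r ^ (Q+c)) := by ring
    _ = cL⁻¹ * (C * 18 ^ (Q+c)) * r ^ c := by
        rw [← Real.rpow_add hr, show -Q + (Q+c) = c from by ring]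

/-- window bound for powers. -/
lemma rpow_window {L U g c : ℝ} (hL : 0 < L) (hLg : L ≤ g) (hgU : g ≤ U) :
    g ^ c ≤ max (L ^ c) (U ^ c) := by
  rcases le_or_gt 0 c with hc | hc
  · exact le_trans (Real.rpow_le_rpow (hL.le.trans hLg) hgU hc) (le_max_right _ _)
  · exact le_trans (Real.rpow_le_rpow_of_nonpos hL hLg hc.le) (le_max_left _ _)

/-- combining the two averages. -/
lemma combine {a pm A₁ A₂ X₁ X₂ s : ℝ} (hpm : 0 < pm) (hs : 0 < s)
    (hA₂ : 0 ≤ A₂) (hX₁ : 0 ≤ X₁) (hX₂ : 0 ≤ X₂)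
    (h1 : A₁ ≤ X₁ * s ^ (-a)) (h2 : A₂ ≤ X₂ * s ^ (a / pm)) :
    A₁ * A₂ ^ pm ≤ X₁ * X₂ ^ pm := by
  have e2 : (X₂ * s ^ (a/pm)) ^ pm = X₂ ^ pm * s ^ a := by
    rw [Real.mul_rpow hX₂ (Real.rpow_nonneg hs.le _), ← Real.rpow_mul hs.le,
      div_mul_cancel₀ _ hpm.ne']
  have h2' : A₂ ^ pm ≤ X₂ ^ pm * s ^ a := by
    calc A₂ ^ pm ≤ (X₂ * s ^ (a/pm)) ^ pm := Real.rpow_le_rpow hA₂ h2 hpm.le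
      _ = _ := e2
  have hfin : A₁ * A₂ ^ pm ≤ (X₁ * s ^ (-a)) * (X₂ ^ pm * s ^ a) :=
    mul_le_mul h1 h2' (Real.rpow_nonneg hA₂ _) (by positivity)
  calc A₁ * A₂ ^ pm ≤ (X₁ * s ^ (-a)) * (X₂ ^ pm * s ^ a) := hfin
    _ = X₁ * X₂ ^ pm * (s ^ (-a) * s ^ a) := by ring
    _ = X₁ * X₂ ^ pm := by
        rw [← Real.rpow_add hs, neg_add_cancel, Real.rpow_zero, mul_one]

end Grush

/-- For `1 < p < ∞` and `-Q(p-1) < a < Q` with `Q = n₁ + (1+κ)n₂`, the weight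
`w_a(x) = d(0,x)^{-a}` belongs to the Muckenhoupt class `A_p` on the homogeneous space
`(ℝ^{n₁+n₂}, d, Lebesgue)`:
`sup_B (|B|⁻¹ ∫_B w_a)(|B|⁻¹ ∫_B w_a^{1-p'})^{p-1} < ∞`, with `p' = p/(p-1)`. -/
theorem grushin_power_weight_Ap (n₁ n₂ κ : ℕ) (hn₁ : 1 ≤ n₁) (hn₂ : 1 ≤ n₂) (hκ : 1 ≤ κ)
    (p a : ℝ) (hp : 1 < p)
    (ha₁ : -(((n₁ : ℝ) + (1 + (κ : ℝ)) * n₂) * (p - 1)) < a)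
    (ha₂ : a < (n₁ : ℝ) + (1 + (κ : ℝ)) * n₂) :
    ∃ C : ℝ, 0 < C ∧ ∀ (x₀ : GS n₁ n₂) (r : ℝ), 0 < r →
      ((volume (gball n₁ n₂ κ x₀ r)).toReal⁻¹ *
          ∫ x in gball n₁ n₂ κ x₀ r, gd n₁ n₂ κ 0 x ^ (-a)) *
        ((volume (gball n₁ n₂ κ x₀ r)).toReal⁻¹ *
          ∫ x in gball n₁ n₂ κ x₀ r, (gd n₁ n₂ κ 0 x ^ (-a)) ^ (1 - p / (p - 1))) ^ (p - 1) ≤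
        C := by
  classical
  have hp1 : (0:ℝ) < p - 1 := by linarith
  have hQcast : ((Grush.Qn κ n₁ n₂ : ℕ) : ℝ) = (n₁ : ℝ) + (1 + (κ : ℝ)) * n₂ := by
    unfold Grush.Qn; push_cast; ring
  have hc₁ : -((Grush.Qn κ n₁ n₂ : ℕ) : ℝ) < -a := by rw [hQcast]; linarith
  have hc₂ : -((Grush.Qn κ n₁ n₂ : ℕ) : ℝ) < a / (p - 1) := by
    rw [lt_div_iff₀ hp1, neg_mul, hQcast]
    exact ha₁
  obtain ⟨C₁, hC₁, hI₁⟩ := Grush.integral_bound κ n₁ n₂ hn₁ hc₁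
  obtain ⟨C₂, hC₂, hI₂⟩ := Grush.integral_bound κ n₁ n₂ hn₁ hc₂
  have hv1 := Grush.cV_pos n₁
  have hv2 := Grush.cV_pos n₂
  refine ⟨(((2:ℝ)⁻¹ ^ Grush.Qn κ n₁ n₂ * (Grush.cV n₁ * Grush.cV n₂))⁻¹ *
        (C₁ * (18:ℝ) ^ (((Grush.Qn κ n₁ n₂ : ℕ) : ℝ) + -a))) *
      (((2:ℝ)⁻¹ ^ Grush.Qn κ n₁ n₂ * (Grush.cV n₁ * Grush.cV n₂))⁻¹ *
        (C₂ * (18:ℝ) ^ (((Grush.Qn κ n₁ n₂ : ℕ) : ℝ) + a / (p-1)))) ^ (p-1) +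
      (max ((16:ℝ) ^ (-(-a))) ((10:ℝ) ^ (-a))) *
      (max ((16:ℝ) ^ (-(a/(p-1)))) ((10:ℝ) ^ (a/(p-1)))) ^ (p-1), by positivity,
    fun x₀ r hr => ?_⟩
  have hrw : ∀ x : GS n₁ n₂,
      (gd n₁ n₂ κ 0 x ^ (-a)) ^ (1 - p / (p-1)) = gd n₁ n₂ κ 0 x ^ (a/(p-1)) := by
    intro x
    rw [← Real.rpow_mul (Grush.gd_nonneg κ n₁ n₂ 0 x)]
    congr 1
    field_simp
    ring
  simp_rw [hrw]
  have hA₂nonneg : 0 ≤ (volume (gball n₁ n₂ κ x₀ r)).toReal⁻¹ *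
      ∫ x in gball n₁ n₂ κ x₀ r, gd n₁ n₂ κ 0 x ^ (a/(p-1)) :=
    mul_nonneg (inv_nonneg.mpr ENNReal.toReal_nonneg)
      (setIntegral_nonneg (Grush.meas_gball κ n₁ n₂ x₀ r)
        fun x _ => Real.rpow_nonneg (Grush.gd_nonneg κ n₁ n₂ 0 x) _)
  by_cases hcase : Grush.rho κ n₁ n₂ x₀ < 4*r
  · -- ball near the origin
    have h18 : (0:ℝ) < 18*r := by linarith
    obtain ⟨hint₁, hbd₁⟩ := hI₁ (18*r) h18
    obtain ⟨hint₂, hbd₂⟩ := hI₂ (18*r) h18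
    have hA1 := Grush.avg_near κ n₁ n₂ x₀ hr hcase hC₁.le hint₁ hbd₁
    have hA2 := Grush.avg_near κ n₁ n₂ x₀ hr hcase hC₂.le hint₂ hbd₂
    have hX₁ : (0:ℝ) ≤ ((2:ℝ)⁻¹ ^ Grush.Qn κ n₁ n₂ * (Grush.cV n₁ * Grush.cV n₂))⁻¹ *
        (C₁ * (18:ℝ) ^ (((Grush.Qn κ n₁ n₂ : ℕ) : ℝ) + -a)) := by positivity
    have hX₂ : (0:ℝ) ≤ ((2:ℝ)⁻¹ ^ Grush.Qn κ n₁ n₂ * (Grush.cV n₁ * Grush.cV n₂))⁻¹ *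
        (C₂ * (18:ℝ) ^ (((Grush.Qn κ n₁ n₂ : ℕ) : ℝ) + a/(p-1))) := by positivity
    have hcomb := Grush.combine hp1 hr hA₂nonneg hX₁ hX₂ hA1 hA2
    refine hcomb.trans (le_add_of_nonneg_right ?_)
    positivity
  · -- ball far from the origin
    push_neg at hcase
    have hρpos : 0 < Grush.rho κ n₁ n₂ x₀ := lt_of_lt_of_le (by linarith) hcase
    have hwin : ∀ x ∈ gball n₁ n₂ κ x₀ r,
        Grush.rho κ n₁ n₂ x₀ / 16 ≤ gd n₁ n₂ κ 0 x ∧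
        gd n₁ n₂ κ 0 x ≤ 10 * Grush.rho κ n₁ n₂ x₀ := by
      intro x hx
      have hgd : gd n₁ n₂ κ x₀ x < r := hx
      have hgd0 : 0 ≤ gd n₁ n₂ κ x₀ x := Grush.gd_nonneg κ n₁ n₂ x₀ x
      have hq1 := Grush.rho_quasi κ n₁ n₂ x₀ x
      have hq2 := Grush.rho_quasi κ n₁ n₂ x x₀
      rw [Grush.gd_comm κ n₁ n₂ x x₀] at hq2
      have hl := Grush.le_gd_zero κ n₁ n₂ x
      have hu := Grush.gd_zero_le κ n₁ n₂ x
      constructor <;> [skip; skip] <;> nlinarith [Grush.rho_nonneg κ n₁ n₂ x]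
    have hgen : ∀ c : ℝ, ∀ x ∈ gball n₁ n₂ κ x₀ r,
        gd n₁ n₂ κ 0 x ^ c ≤
          Grush.rho κ n₁ n₂ x₀ ^ c * max ((16:ℝ)^(-c)) ((10:ℝ)^c) := by
      intro c x hx
      obtain ⟨hL, hU⟩ := hwin x hx
      refine (Grush.rpow_window (by positivity) hL hU (c := c)).trans ?_
      have e1 : (Grush.rho κ n₁ n₂ x₀ / 16 : ℝ) ^ c =
          Grush.rho κ n₁ n₂ x₀ ^ c * (16:ℝ) ^ (-c) := by
        rw [Real.div_rpow hρpos.le (by norm_num), Real.rpow_neg (by norm_num),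
          div_eq_mul_inv]
      have e2 : ((10:ℝ) * Grush.rho κ n₁ n₂ x₀) ^ c =
          Grush.rho κ n₁ n₂ x₀ ^ c * (10:ℝ) ^ c := by
        rw [Real.mul_rpow (by norm_num) hρpos.le]; ring
      rw [e1, e2]
      have hρc : (0:ℝ) ≤ Grush.rho κ n₁ n₂ x₀ ^ c := Real.rpow_nonneg hρpos.le _
      exact max_le (mul_le_mul_of_nonneg_left (le_max_left _ _) hρc)
        (mul_le_mul_of_nonneg_left (le_max_right _ _) hρc)
    have hK₁ : (0:ℝ) ≤ max ((16:ℝ) ^ (-(-a))) ((10:ℝ) ^ (-a)) := by positivity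
    have hK₂ : (0:ℝ) ≤ max ((16:ℝ) ^ (-(a/(p-1)))) ((10:ℝ) ^ (a/(p-1))) := by positivity
    have hA1 : (volume (gball n₁ n₂ κ x₀ r)).toReal⁻¹ *
        ∫ x in gball n₁ n₂ κ x₀ r, gd n₁ n₂ κ 0 x ^ (-a) ≤
        (max ((16:ℝ) ^ (-(-a))) ((10:ℝ) ^ (-a))) * Grush.rho κ n₁ n₂ x₀ ^ (-a) := by
      refine (Grush.avg_le κ n₁ n₂ x₀ hr
        (M := Grush.rho κ n₁ n₂ x₀ ^ (-a) * max ((16:ℝ)^(-(-a))) ((10:ℝ)^(-a)))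
        (by positivity) (hgen (-a))).trans_eq (mul_comm _ _)
    have hA2 : (volume (gball n₁ n₂ κ x₀ r)).toReal⁻¹ *
        ∫ x in gball n₁ n₂ κ x₀ r, gd n₁ n₂ κ 0 x ^ (a/(p-1)) ≤
        (max ((16:ℝ) ^ (-(a/(p-1)))) ((10:ℝ) ^ (a/(p-1)))) *
          Grush.rho κ n₁ n₂ x₀ ^ (a/(p-1)) := by
      refine (Grush.avg_le κ n₁ n₂ x₀ hr
        (M := Grush.rho κ n₁ n₂ x₀ ^ (a/(p-1)) *
          max ((16:ℝ)^(-(a/(p-1)))) ((10:ℝ)^(a/(p-1))))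
        (by positivity) (hgen (a/(p-1)))).trans_eq (mul_comm _ _)
    have hcomb := Grush.combine hp1 hρpos hA₂nonneg hK₁ hK₂ hA1 hA2
    refine hcomb.trans (le_add_of_nonneg_left ?_)
    positivity
end
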